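/- arXiv:2007.02009 — 9 statements merged into one kernel-verified Lean document; each statement's English description precedes it below -/
import Mathlib

section
/- Let f(z) = Σ_{n≥1} a_n z^n be a function in the Dirichlet-type space D_t with t ≠ 0 (i.e., Σ |a_n|² (n+1)^t < ∞). If the system {f(z^k)}_{k∈ℕ} is orthogonal in D_t, i.e., ⟨f(z^k), f(z^l)⟩_{D_t} = 0 for all k ≠ l, then f(z) = c·z^N for some constant c and some positive integer N. -/
open scoped BigOperators

/-- The `D_t`-inner product `⟨f(z^k), f(z^l)⟩` of two power dilations of
`f(z) = ∑_{n ≥ 1} a_n z^n`, computed via the coefficient formula: with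
`d = gcd(k, l)`, it equals `∑_{n ≥ 1} a_{n·(l/d)} · conj(a_{n·(k/d)}) · (n·lcm(k,l) + 1)^t`. -/
noncomputable def dilationInner (t : ℝ) (a : ℕ → ℂ) (k l : ℕ) : ℂ :=
  ∑' n : ℕ,
    a ((n + 1) * (l / Nat.gcd k l)) * (starRingEnd ℂ) (a ((n + 1) * (k / Nat.gcd k l))) *
      (((((n : ℝ) + 1) * (Nat.lcm k l : ℝ) + 1) ^ t : ℝ) : ℂ)


open Filter Function Complex Topology

namespace PDOM

lemma rpow_ratio_le {A B K : ℝ} (t : ℝ) (hA : 0 < A) (hAB : A ≤ B) (hBK : B ≤ K * A)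
    (hK : 1 ≤ K) : B ^ t ≤ K ^ |t| * A ^ t := by
  have hB : 0 < B := hA.trans_le hAB
  have hK0 : (0:ℝ) < K := lt_of_lt_of_le one_pos hK
  rcases le_or_gt 0 t with h | h
  · rw [_root_.abs_of_nonneg h]
    calc B ^ t ≤ (K * A) ^ t := Real.rpow_le_rpow hB.le hBK h
    _ = K ^ t * A ^ t := Real.mul_rpow hK0.le hA.le
  · rw [_root_.abs_of_neg h]
    have h1 : B ^ t ≤ A ^ t := Real.rpow_le_rpow_of_nonpos hA hAB h.le
    have h2 : (1:ℝ) ≤ K ^ (-t) := Real.one_le_rpow hK (by linarith)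
    nlinarith [Real.rpow_pos_of_pos hA t]

lemma rpow_ratio_le' {A B K : ℝ} (t : ℝ) (hA : 0 < A) (hAB : A ≤ B) (hBK : B ≤ K * A)
    (hK : 1 ≤ K) : A ^ t ≤ K ^ |t| * B ^ t := by
  have hB : 0 < B := hA.trans_le hAB
  have hK0 : (0:ℝ) < K := lt_of_lt_of_le one_pos hK
  rcases le_or_gt 0 t with h | h
  · rw [_root_.abs_of_nonneg h]
    have h1 : A ^ t ≤ B ^ t := Real.rpow_le_rpow hA.le hAB h
    have h2 : (1:ℝ) ≤ K ^ t := Real.one_le_rpow hK h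
    nlinarith [Real.rpow_pos_of_pos hB t]
  · rw [_root_.abs_of_neg h]
    have hBKA : B / K ≤ A := by rw [div_le_iff₀ hK0]; linarith [mul_comm A K]
    have hBK0 : 0 < B / K := div_pos hB hK0
    have h1 : A ^ t ≤ (B / K) ^ t := Real.rpow_le_rpow_of_nonpos hBK0 hBKA h.le
    calc A ^ t ≤ (B / K) ^ t := h1
    _ = B ^ t / K ^ t := Real.div_rpow hB.le hK0.le t
    _ = K ^ (-t) * B ^ t := by
        rw [Real.rpow_neg hK0.le]
        field_simp
    _ ≤ K ^ (-t) * B ^ t := le_refl _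

/-- Mean value bound: `|(x+ε)^t - x^t| ≤ |t| * 2^|t-1| * x^(t-1) * ε` for `1 ≤ x`,
`0 < ε ≤ 1`. -/
lemma slope_bound {x ε : ℝ} (t : ℝ) (hx : 1 ≤ x) (hε : 0 < ε) (hε1 : ε ≤ 1) :
    |(x + ε) ^ t - x ^ t| ≤ |t| * 2 ^ |t - 1| * x ^ (t - 1) * ε := by
  have hx0 : (0:ℝ) < x := lt_of_lt_of_le one_pos hx
  have hlt : x < x + ε := by linarith
  have hcont : ContinuousOn (fun y : ℝ => y ^ t) (Set.Icc x (x + ε)) := by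
    intro y hy
    have hy0 : y ≠ 0 := by
      have : x ≤ y := hy.1
      exact ne_of_gt (lt_of_lt_of_le hx0 this)
    exact ((Real.continuousAt_rpow_const y t (Or.inl hy0)).continuousWithinAt)
  have hderiv : ∀ y ∈ Set.Ioo x (x + ε),
      HasDerivAt (fun y : ℝ => y ^ t) (t * y ^ (t - 1)) y := by
    intro y hy
    have hy0 : y ≠ 0 := by nlinarith [hy.1]
    exact Real.hasDerivAt_rpow_const (Or.inl hy0)
  obtain ⟨ξ, hξmem, hξ⟩ := exists_hasDerivAt_eq_slope (fun y : ℝ => y ^ t)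
    (fun y => t * y ^ (t - 1)) hlt hcont hderiv
  have hξ0 : 0 < ξ := lt_trans hx0 hξmem.1
  have hdiff : (x + ε) ^ t - x ^ t = t * ξ ^ (t - 1) * ε := by
    rw [show x + ε - x = ε by ring, eq_div_iff hε.ne'] at hξ
    linarith [hξ]
  rw [hdiff]
  have hbound : ξ ^ (t - 1) ≤ 2 ^ |t - 1| * x ^ (t - 1) := by
    apply rpow_ratio_le (t - 1) hx0 hξmem.1.le _ one_le_two
    nlinarith [hξmem.2]
  have hpos : (0:ℝ) < ξ ^ (t - 1) := Real.rpow_pos_of_pos hξ0 _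
  have hxp : (0:ℝ) < x ^ (t - 1) := Real.rpow_pos_of_pos hx0 _
  calc |t * ξ ^ (t - 1) * ε| = |t| * ξ ^ (t - 1) * ε := by
        rw [abs_mul, abs_mul, abs_of_pos hpos, abs_of_pos hε]
  _ ≤ |t| * (2 ^ |t - 1| * x ^ (t - 1)) * ε :=
        mul_le_mul_of_nonneg_right (mul_le_mul_of_nonneg_left hbound (abs_nonneg t)) hε.le
  _ = |t| * 2 ^ |t - 1| * x ^ (t - 1) * ε := by ring


section Moments

variable {t : ℝ} {a : ℕ → ℂ}

lemma summable_shift (hmem : Summable fun n : ℕ => ‖a n‖ ^ 2 * (((n : ℝ) + 1) ^ t))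
    {u : ℕ} (hu : 0 < u) :
    Summable fun n : ℕ => ‖a ((n + 1) * u)‖ ^ 2 * (((n : ℝ) + 1) ^ t) := by
  have hinj : Function.Injective fun n : ℕ => (n + 1) * u := by
    intro m n h
    simp only [] at h
    have := Nat.eq_of_mul_eq_mul_right hu h
    omega
  have h1 := hmem.comp_injective hinj
  have h2 : Summable fun n : ℕ => (((u : ℝ) + 1) ^ |t|) *
      (‖a ((n + 1) * u)‖ ^ 2 * (((((n + 1) * u : ℕ) : ℝ) + 1) ^ t)) := h1.mul_left _
  apply Summable.of_nonneg_of_le (fun n => by positivity) _ h2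
  intro n
  have hu1 : (1 : ℝ) ≤ (u : ℝ) := by exact_mod_cast hu
  have key : ((n : ℝ) + 1) ^ t ≤ (((u : ℝ) + 1) ^ |t|) * ((((n + 1) * u : ℕ) : ℝ) + 1) ^ t := by
    apply rpow_ratio_le' t (by positivity) ?_ ?_ (by linarith)
    · push_cast; nlinarith
    · push_cast; nlinarith
  calc ‖a ((n + 1) * u)‖ ^ 2 * (((n : ℝ) + 1) ^ t)
      ≤ ‖a ((n + 1) * u)‖ ^ 2 * ((((u : ℝ) + 1) ^ |t|) * ((((n + 1) * u : ℕ) : ℝ) + 1) ^ t) :=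
        mul_le_mul_of_nonneg_left key (by positivity)
    _ = (((u : ℝ) + 1) ^ |t|) *
        (‖a ((n + 1) * u)‖ ^ 2 * ((((n + 1) * u : ℕ) : ℝ) + 1) ^ t) := by ring

lemma summable_SB (hmem : Summable fun n : ℕ => ‖a n‖ ^ 2 * (((n : ℝ) + 1) ^ t))
    {u v : ℕ} (hu : 0 < u) (hv : 0 < v) :
    Summable fun n : ℕ => ‖a ((n + 1) * u)‖ * ‖a ((n + 1) * v)‖ * (((n : ℝ) + 1) ^ t) := by
  have h1 := summable_shift hmem hu
  have h2 := summable_shift hmem hv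
  have h3 : Summable fun n : ℕ => (‖a ((n + 1) * u)‖ ^ 2 * (((n : ℝ) + 1) ^ t) +
      ‖a ((n + 1) * v)‖ ^ 2 * (((n : ℝ) + 1) ^ t)) / 2 := (h1.add h2).div_const 2
  apply Summable.of_nonneg_of_le (fun n => by positivity) _ h3
  intro n
  have hw : (0 : ℝ) < ((n : ℝ) + 1) ^ t := Real.rpow_pos_of_pos (by positivity) t
  have := sq_nonneg (‖a ((n + 1) * u)‖ - ‖a ((n + 1) * v)‖)
  nlinarith [norm_nonneg (a ((n + 1) * u)), norm_nonneg (a ((n + 1) * v))]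

/-- The two moment equations extracted from the orthogonality relations. -/
lemma moments (ht : t ≠ 0)
    (hmem : Summable fun n : ℕ => ‖a n‖ ^ 2 * (((n : ℝ) + 1) ^ t))
    (horth : ∀ k l : ℕ, 0 < k → 0 < l → k ≠ l → dilationInner t a k l = 0)
    {u v : ℕ} (hu : 0 < u) (hv : 0 < v) (hco : Nat.Coprime u v) (hne : u ≠ v) :
    (∑' n : ℕ, a ((n + 1) * u) * (starRingEnd ℂ) (a ((n + 1) * v)) *
        (((((n : ℝ) + 1) ^ t : ℝ)) : ℂ) = 0) ∧
    (∑' n : ℕ, a ((n + 1) * u) * (starRingEnd ℂ) (a ((n + 1) * v)) *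
        (((((n : ℝ) + 1) ^ (t - 1) : ℝ)) : ℂ) = 0) := by
  classical
  set A : ℕ → ℂ := fun n => a ((n + 1) * u) * (starRingEnd ℂ) (a ((n + 1) * v)) with hAdef
  have hnormA : ∀ n, ‖A n‖ = ‖a ((n + 1) * u)‖ * ‖a ((n + 1) * v)‖ := by
    intro n
    rw [hAdef]
    simp only [norm_mul, RCLike.norm_conj]
  have hSB := summable_SB hmem hu hv
  -- the dominating function for the first limit
  set bd : ℕ → ℝ := fun n =>
    (2 : ℝ) ^ |t| * (‖a ((n + 1) * u)‖ * ‖a ((n + 1) * v)‖ * (((n : ℝ) + 1) ^ t)) with hbddef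
  have hbdsum : Summable bd := hSB.mul_left _
  have hbd : ∀ ε : ℝ, 0 ≤ ε → ε ≤ 1 → ∀ n : ℕ,
      ‖A n * (((((n : ℝ) + 1 + ε) ^ t : ℝ)) : ℂ)‖ ≤ bd n := by
    intro ε h0 h1 n
    have hA1 : (0 : ℝ) < (n : ℝ) + 1 := by positivity
    have hw : ((n : ℝ) + 1 + ε) ^ t ≤ (2 : ℝ) ^ |t| * (((n : ℝ) + 1) ^ t) :=
      rpow_ratio_le t hA1 (by linarith) (by linarith) one_le_two
    have hwpos : (0 : ℝ) < ((n : ℝ) + 1 + ε) ^ t := Real.rpow_pos_of_pos (by linarith) t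
    rw [norm_mul, hnormA, Complex.norm_real, Real.norm_eq_abs, _root_.abs_of_pos hwpos, hbddef]
    have hAn : (0 : ℝ) ≤ ‖a ((n + 1) * u)‖ * ‖a ((n + 1) * v)‖ := by positivity
    calc ‖a ((n + 1) * u)‖ * ‖a ((n + 1) * v)‖ * (((n : ℝ) + 1 + ε) ^ t)
        ≤ ‖a ((n + 1) * u)‖ * ‖a ((n + 1) * v)‖ * ((2 : ℝ) ^ |t| * (((n : ℝ) + 1) ^ t)) :=
          mul_le_mul_of_nonneg_left hw hAn
      _ = (2 : ℝ) ^ |t| * (‖a ((n + 1) * u)‖ * ‖a ((n + 1) * v)‖ * (((n : ℝ) + 1) ^ t)) := by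
          ring
  have hsumε : ∀ ε : ℝ, 0 ≤ ε → ε ≤ 1 →
      Summable fun n : ℕ => A n * (((((n : ℝ) + 1 + ε) ^ t : ℝ)) : ℂ) := by
    intro ε h0 h1
    exact Summable.of_norm_bounded hbdsum (hbd ε h0 h1)
  -- the orthogonality equations in scaled form
  have hEq : ∀ r : ℕ, 0 < r →
      ∑' n : ℕ, A n * (((((n : ℝ) + 1 + (((r * (v * u) : ℕ) : ℝ))⁻¹) ^ t : ℝ)) : ℂ) = 0 := by
    intro r hr
    have hkl : r * v ≠ r * u := by
      intro h
      exact hne (Nat.eq_of_mul_eq_mul_left hr h).symm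
    have h0 := horth (r * v) (r * u) (Nat.mul_pos hr hv) (Nat.mul_pos hr hu) hkl
    rw [dilationInner] at h0
    have hgcd : Nat.gcd (r * v) (r * u) = r := by
      rw [Nat.gcd_mul_left, (Nat.coprime_comm.mp hco : Nat.Coprime v u), mul_one]
    have hlcm : Nat.lcm (r * v) (r * u) = r * (v * u) := by
      rw [Nat.lcm_mul_left, Nat.Coprime.lcm_eq_mul (Nat.coprime_comm.mp hco)]
    rw [hgcd, hlcm, Nat.mul_div_cancel_left u hr, Nat.mul_div_cancel_left v hr] at h0
    set L : ℝ := ((r * (v * u) : ℕ) : ℝ) with hLdef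
    have hL1 : (1 : ℝ) ≤ L := by
      rw [hLdef]
      exact_mod_cast Nat.one_le_iff_ne_zero.mpr (by positivity)
    have hL0 : (0 : ℝ) < L := lt_of_lt_of_le one_pos hL1
    have hterm : ∀ n : ℕ, a ((n + 1) * u) * (starRingEnd ℂ) (a ((n + 1) * v)) *
        (((((n : ℝ) + 1) * L + 1) ^ t : ℝ) : ℂ)
        = ((L ^ t : ℝ) : ℂ) * (A n * (((((n : ℝ) + 1 + L⁻¹) ^ t : ℝ)) : ℂ)) := by
      intro n
      have hsplit : ((n : ℝ) + 1) * L + 1 = L * ((n : ℝ) + 1 + L⁻¹) := by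
        field_simp
      rw [hsplit, Real.mul_rpow hL0.le (by positivity), hAdef]
      push_cast
      ring
    rw [tsum_congr hterm, tsum_mul_left] at h0
    rcases mul_eq_zero.mp h0 with h | h
    · exfalso
      have : (L ^ t : ℝ) ≠ 0 := ne_of_gt (Real.rpow_pos_of_pos hL0 t)
      exact this (by exact_mod_cast h)
    · exact h
  -- the sequence of epsilons
  set L : ℕ → ℝ := fun r => (((r + 1) * (v * u) : ℕ) : ℝ) with hLdef
  set ε : ℕ → ℝ := fun r => (L r)⁻¹ with hεdef
  have hL1 : ∀ r, (1 : ℝ) ≤ L r := by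
    intro r
    show (1 : ℝ) ≤ (((r + 1) * (v * u) : ℕ) : ℝ)
    exact_mod_cast Nat.one_le_iff_ne_zero.mpr (by positivity)
  have hε0 : ∀ r, 0 < ε r := fun r => inv_pos.mpr (lt_of_lt_of_le one_pos (hL1 r))
  have hε1 : ∀ r, ε r ≤ 1 := fun r => inv_le_one_of_one_le₀ (hL1 r)
  have hεto : Tendsto ε atTop (𝓝 0) := by
    apply tendsto_inv_atTop_zero.comp
    apply tendsto_atTop_mono (fun r => ?_) tendsto_natCast_atTop_atTop
    show (r : ℝ) ≤ (((r + 1) * (v * u) : ℕ) : ℝ)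
    exact_mod_cast Nat.le_trans (Nat.le_succ r) (Nat.le_mul_of_pos_right _ (Nat.mul_pos hv hu))
  have hEqε : ∀ r : ℕ, ∑' n : ℕ, A n * (((((n : ℝ) + 1 + ε r) ^ t : ℝ)) : ℂ) = 0 := by
    intro r
    exact hEq (r + 1) (Nat.succ_pos r)
  -- first limit: the t-moment vanishes
  have hM0 : ∑' n : ℕ, A n * (((((n : ℝ) + 1) ^ t : ℝ)) : ℂ) = 0 := by
    have htd : Tendsto (fun r => ∑' n : ℕ, A n * (((((n : ℝ) + 1 + ε r) ^ t : ℝ)) : ℂ)) atTop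
        (𝓝 (∑' n : ℕ, A n * (((((n : ℝ) + 1) ^ t : ℝ)) : ℂ))) := by
      apply tendsto_tsum_of_dominated_convergence hbdsum
      · intro n
        have hbase : ((n : ℝ) + 1) ≠ 0 := by positivity
        have hc1 : Tendsto (fun e : ℝ => (n : ℝ) + 1 + e) (𝓝 0) (𝓝 ((n : ℝ) + 1)) := by
          have h := ((continuous_const (y := (n : ℝ) + 1)).add continuous_id).tendsto (0 : ℝ)
          simpa [Pi.add_def] using h
        have hc2 : Tendsto (fun y : ℝ => y ^ t) (𝓝 ((n : ℝ) + 1)) (𝓝 (((n : ℝ) + 1) ^ t)) :=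
          (Real.continuousAt_rpow_const _ t (Or.inl hbase)).tendsto
        have hc3 : Tendsto (fun e : ℝ => (((n : ℝ) + 1 + e) ^ t : ℝ)) (𝓝 0)
            (𝓝 (((n : ℝ) + 1) ^ t)) := hc2.comp hc1
        have hc4 := (Complex.continuous_ofReal.tendsto _).comp (hc3.comp hεto)
        exact tendsto_const_nhds.mul hc4
      · exact Eventually.of_forall fun r n => hbd (ε r) (hε0 r).le (hε1 r) n
    rw [funext hEqε] at htd
    exact (tendsto_nhds_unique tendsto_const_nhds htd).symm
  refine ⟨hM0, ?_⟩
  have hM1pre : ∀ r : ℕ, ∑' n : ℕ,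
      A n * ((((((n : ℝ) + 1 + ε r) ^ t - ((n : ℝ) + 1) ^ t) / ε r : ℝ)) : ℂ) = 0 := by
    intro r
    have h1 := hsumε (ε r) (hε0 r).le (hε1 r)
    have h2 : Summable fun n : ℕ => A n * (((((n : ℝ) + 1) ^ t : ℝ)) : ℂ) := by
      have h := hsumε 0 le_rfl zero_le_one
      simpa using h
    have hdiff : ∑' n : ℕ, (A n * (((((n : ℝ) + 1 + ε r) ^ t : ℝ)) : ℂ)
        - A n * (((((n : ℝ) + 1) ^ t : ℝ)) : ℂ)) = 0 := by
      rw [h1.tsum_sub h2, hEqε r, hM0, sub_zero]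
    have hterm : ∀ n : ℕ,
        A n * ((((((n : ℝ) + 1 + ε r) ^ t - ((n : ℝ) + 1) ^ t) / ε r : ℝ)) : ℂ)
        = (((ε r)⁻¹ : ℝ) : ℂ) * (A n * (((((n : ℝ) + 1 + ε r) ^ t : ℝ)) : ℂ)
          - A n * (((((n : ℝ) + 1) ^ t : ℝ)) : ℂ)) := by
      intro n
      have hq : (((((n : ℝ) + 1 + ε r) ^ t - ((n : ℝ) + 1) ^ t) / ε r : ℝ))
          = (ε r)⁻¹ * ((((n : ℝ) + 1 + ε r) ^ t) - (((n : ℝ) + 1) ^ t)) := by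
        rw [div_eq_inv_mul]
      rw [hq]
      push_cast
      ring
    rw [tsum_congr hterm, tsum_mul_left, hdiff, mul_zero]
  set bd2 : ℕ → ℝ := fun n => (|t| * 2 ^ |t - 1|) *
    (‖a ((n + 1) * u)‖ * ‖a ((n + 1) * v)‖ * (((n : ℝ) + 1) ^ t)) with hbd2def
  have hbd2sum : Summable bd2 := hSB.mul_left _
  have htd2 : Tendsto (fun r => ∑' n : ℕ,
      A n * ((((((n : ℝ) + 1 + ε r) ^ t - ((n : ℝ) + 1) ^ t) / ε r : ℝ)) : ℂ)) atTop
      (𝓝 (∑' n : ℕ, A n * (((t * ((n : ℝ) + 1) ^ (t - 1) : ℝ)) : ℂ))) := by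
    apply tendsto_tsum_of_dominated_convergence hbd2sum
    · intro n
      have hbase : (0:ℝ) < (n : ℝ) + 1 := by positivity
      have h1 : HasDerivAt (fun e : ℝ => (n : ℝ) + 1 + e) 1 0 := by
        simpa using (hasDerivAt_id (0:ℝ)).const_add ((n : ℝ) + 1)
      have h2 : HasDerivAt (fun y : ℝ => y ^ t) (t * ((n : ℝ) + 1) ^ (t - 1))
          ((n : ℝ) + 1 + 0) := by
        rw [add_zero]
        exact Real.hasDerivAt_rpow_const (Or.inl hbase.ne')
      have h3 : HasDerivAt (fun e : ℝ => ((n : ℝ) + 1 + e) ^ t)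
          (t * ((n : ℝ) + 1) ^ (t - 1)) 0 := by
        have h := h2.comp 0 h1
        simpa [Function.comp_def] using h
      have h4 : Tendsto (slope (fun e : ℝ => ((n : ℝ) + 1 + e) ^ t) 0) (𝓝[≠] 0)
          (𝓝 (t * ((n : ℝ) + 1) ^ (t - 1))) := hasDerivAt_iff_tendsto_slope.mp h3
      have h5 : Tendsto ε atTop (𝓝[≠] (0:ℝ)) :=
        tendsto_nhdsWithin_of_tendsto_nhds_of_eventually_within ε hεto
          (Eventually.of_forall fun r =>
            (by simpa using (hε0 r).ne' : ε r ∈ ({0}ᶜ : Set ℝ)))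
      have h6 := h4.comp h5
      have h7 : ∀ r : ℕ, (slope (fun e : ℝ => ((n : ℝ) + 1 + e) ^ t) 0 ∘ ε) r
          = (((n : ℝ) + 1 + ε r) ^ t - ((n : ℝ) + 1) ^ t) / ε r := by
        intro r
        show slope (fun e : ℝ => ((n : ℝ) + 1 + e) ^ t) 0 (ε r) = _
        rw [slope_def_field]
        norm_num
      have h8 := h6.congr h7
      exact tendsto_const_nhds.mul ((Complex.continuous_ofReal.tendsto _).comp h8)
    · apply Eventually.of_forall
      intro r n
      have hcn : (0:ℝ) ≤ (n : ℝ) := Nat.cast_nonneg n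
      have hx1 : (1:ℝ) ≤ (n : ℝ) + 1 := by linarith
      have hb := slope_bound t hx1 (hε0 r) (hε1 r)
      rw [norm_mul, hnormA, Complex.norm_real, Real.norm_eq_abs]
      have habs : |(((n : ℝ) + 1 + ε r) ^ t - ((n : ℝ) + 1) ^ t) / ε r|
          ≤ |t| * 2 ^ |t - 1| * ((n : ℝ) + 1) ^ (t - 1) := by
        rw [abs_div, _root_.abs_of_pos (hε0 r), div_le_iff₀ (hε0 r)]
        exact hb
      have hmono : ((n : ℝ) + 1) ^ (t - 1) ≤ ((n : ℝ) + 1) ^ t :=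
        Real.rpow_le_rpow_of_exponent_le hx1 (by linarith)
      have hAn : (0 : ℝ) ≤ ‖a ((n + 1) * u)‖ * ‖a ((n + 1) * v)‖ := by positivity
      have htpos : (0:ℝ) ≤ |t| * 2 ^ |t - 1| := by positivity
      calc ‖a ((n + 1) * u)‖ * ‖a ((n + 1) * v)‖
            * |(((n : ℝ) + 1 + ε r) ^ t - ((n : ℝ) + 1) ^ t) / ε r|
          ≤ ‖a ((n + 1) * u)‖ * ‖a ((n + 1) * v)‖
            * (|t| * 2 ^ |t - 1| * ((n : ℝ) + 1) ^ (t - 1)) :=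
            mul_le_mul_of_nonneg_left habs hAn
        _ ≤ ‖a ((n + 1) * u)‖ * ‖a ((n + 1) * v)‖
            * (|t| * 2 ^ |t - 1| * ((n : ℝ) + 1) ^ t) := by
            apply mul_le_mul_of_nonneg_left _ hAn
            exact mul_le_mul_of_nonneg_left hmono htpos
        _ = bd2 n := by rw [hbd2def]; ring
  rw [funext hM1pre] at htd2
  have hfin : ∑' n : ℕ, A n * (((t * ((n : ℝ) + 1) ^ (t - 1) : ℝ)) : ℂ) = 0 :=
    (tendsto_nhds_unique tendsto_const_nhds htd2).symm
  have hterm2 : ∀ n : ℕ, A n * (((t * ((n : ℝ) + 1) ^ (t - 1) : ℝ)) : ℂ)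
      = (t : ℂ) * (A n * (((((n : ℝ) + 1) ^ (t - 1) : ℝ)) : ℂ)) := by
    intro n
    push_cast
    ring
  rw [tsum_congr hterm2, tsum_mul_left] at hfin
  rcases mul_eq_zero.mp hfin with h | h
  · exact absurd (by exact_mod_cast h : t = 0) ht
  · exact h

end Moments


lemma nt {N q m n : ℕ} (hN : 0 < N) (h : m * q = N * n) :
    ∃ j : ℕ, m = j * (N / Nat.gcd N q) ∧ n = j * (q / Nat.gcd N q) := by
  set g := Nat.gcd N q with hg
  have hg0 : 0 < g := Nat.gcd_pos_of_pos_left q hN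
  have hgN : g ∣ N := Nat.gcd_dvd_left N q
  have hgq : g ∣ q := Nat.gcd_dvd_right N q
  set u := N / g with hu
  set v := q / g with hv
  have hNu : u * g = N := Nat.div_mul_cancel hgN
  have hqv : v * g = q := Nat.div_mul_cancel hgq
  have hco : Nat.Coprime u v := Nat.coprime_div_gcd_div_gcd hg0
  have key : m * v = u * n := by
    have h2 : (m * v) * g = (u * n) * g := by
      calc (m * v) * g = m * (v * g) := by ring
        _ = m * q := by rw [hqv]
        _ = N * n := h
        _ = (u * g) * n := by rw [hNu]
        _ = (u * n) * g := by ring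
    exact Nat.eq_of_mul_eq_mul_right hg0 h2
  have hudvd : u ∣ m := by
    apply Nat.Coprime.dvd_of_dvd_mul_right hco
    rw [key]
    exact Dvd.intro n rfl
  obtain ⟨j, hj⟩ := hudvd
  have hu0 : 0 < u := Nat.div_pos (Nat.le_of_dvd hN hgN) hg0
  refine ⟨j, by rw [hj, mul_comm], ?_⟩
  have h3 : u * (j * v) = u * n := by
    calc u * (j * v) = (u * j) * v := by ring
      _ = m * v := by rw [← hj]
      _ = u * n := key
  have := Nat.eq_of_mul_eq_mul_left hu0 h3
  omega


lemma key_div (N q : ℕ) : (N / Nat.gcd N q) * q = N * (q / Nat.gcd N q) := by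
  rcases Nat.eq_zero_or_pos (Nat.gcd N q) with h | h
  · have hN := Nat.eq_zero_of_gcd_eq_zero_left h
    have hq := Nat.eq_zero_of_gcd_eq_zero_right h
    simp [hN, hq]
  · apply Nat.eq_of_mul_eq_mul_right h
    calc N / Nat.gcd N q * q * Nat.gcd N q
        = (N / Nat.gcd N q * Nat.gcd N q) * q := by ring
      _ = N * q := by rw [Nat.div_mul_cancel (Nat.gcd_dvd_left N q)]
      _ = N * (q / Nat.gcd N q * Nat.gcd N q) := by rw [Nat.div_mul_cancel (Nat.gcd_dvd_right N q)]
      _ = N * (q / Nat.gcd N q) * Nat.gcd N q := by ring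

/-- The index set of triples `(m, n, q)` with `m * q = N * n`. -/
def PIdx (N : ℕ) : Type := {p : ℕ × ℕ × ℕ // p.1 * p.2.2 = N * p.2.1}

/-- The summand of the key triple sum. -/
noncomputable def FP (N : ℕ) (c : ℕ → ℂ) (p : PIdx N) : ℂ :=
  c p.val.1 * (starRingEnd ℂ) (c p.val.2.1) * c p.val.2.2 *
    (((N : ℝ) / ((p.val.2.2 : ℕ) : ℝ)) : ℂ)

/-- First parametrization of `PIdx N`: by `(q, j)`. -/
def i1 (N : ℕ) (x : ℕ × ℕ) : PIdx N :=
  ⟨(x.2 * (N / Nat.gcd N x.1), x.2 * (x.1 / Nat.gcd N x.1), x.1), by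
    calc (x.2 * (N / Nat.gcd N x.1)) * x.1 = x.2 * ((N / Nat.gcd N x.1) * x.1) := by ring
      _ = x.2 * (N * (x.1 / Nat.gcd N x.1)) := by rw [key_div]
      _ = N * (x.2 * (x.1 / Nat.gcd N x.1)) := by ring⟩

/-- Second parametrization of `PIdx N`: by `(m, j)`. -/
def i2 (N : ℕ) (x : ℕ × ℕ) : PIdx N :=
  ⟨(x.1, x.2 * (x.1 / Nat.gcd N x.1), x.2 * (N / Nat.gcd N x.1)), by
    calc x.1 * (x.2 * (N / Nat.gcd N x.1)) = x.2 * ((N / Nat.gcd N x.1) * x.1) := by ring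
      _ = x.2 * (N * (x.1 / Nat.gcd N x.1)) := by rw [key_div]
      _ = N * (x.2 * (x.1 / Nat.gcd N x.1)) := by ring⟩

lemma Upos {N : ℕ} (hN : 0 < N) (q : ℕ) : 0 < N / Nat.gcd N q :=
  Nat.div_pos (Nat.le_of_dvd hN (Nat.gcd_dvd_left N q)) (Nat.gcd_pos_of_pos_left q hN)

lemma Vpos {N q : ℕ} (hN : 0 < N) (hq : 0 < q) : 0 < q / Nat.gcd N q :=
  Nat.div_pos (Nat.le_of_dvd hq (Nat.gcd_dvd_right N q)) (Nat.gcd_pos_of_pos_left q hN)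

lemma UVne {N q : ℕ} (hN : 0 < N) (hq : q ≠ N) :
    N / Nat.gcd N q ≠ q / Nat.gcd N q := by
  intro heq
  apply hq
  have h1 : N / Nat.gcd N q * Nat.gcd N q = N := Nat.div_mul_cancel (Nat.gcd_dvd_left N q)
  have h2 : q / Nat.gcd N q * Nat.gcd N q = q := Nat.div_mul_cancel (Nat.gcd_dvd_right N q)
  have h3 : N / Nat.gcd N q * Nat.gcd N q = q / Nat.gcd N q * Nat.gcd N q := by rw [heq]
  rw [h1, h2] at h3
  exact h3.symm

lemma i1_bij {N : ℕ} (hN : 0 < N) : Bijective (i1 N) := by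
  constructor
  · intro x y h
    have hval := congrArg Subtype.val h
    simp only [i1, Prod.mk.injEq] at hval
    obtain ⟨h1, -, h3⟩ := hval
    rw [h3] at h1
    have := Nat.eq_of_mul_eq_mul_right (Upos hN y.1) h1
    exact Prod.ext h3 this
  · rintro ⟨⟨m, n, q⟩, hp⟩
    obtain ⟨j, hj1, hj2⟩ := nt hN hp
    exact ⟨(q, j), by apply Subtype.ext; simp [i1, ← hj1, ← hj2]⟩

lemma i2_bij {N : ℕ} (hN : 0 < N) : Bijective (i2 N) := by
  constructor
  · intro x y h
    have hval := congrArg Subtype.val h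
    simp only [i2, Prod.mk.injEq] at hval
    obtain ⟨h1, -, h3⟩ := hval
    rw [h1] at h3
    have := Nat.eq_of_mul_eq_mul_right (Upos hN y.1) h3
    exact Prod.ext h1 this
  · rintro ⟨⟨m, n, q⟩, hp⟩
    rw [mul_comm m q] at hp
    obtain ⟨j, hj1, hj2⟩ := nt hN hp
    exact ⟨(m, j), by apply Subtype.ext; simp [i2, ← hj1, ← hj2]⟩

lemma mul_conj_norm (z : ℂ) : z * (starRingEnd ℂ) z = ((‖z‖ ^ 2 : ℝ) : ℂ) := by
  rw [Complex.mul_conj, Complex.normSq_eq_norm_sq]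


end PDOM

open PDOM in
set_option maxHeartbeats 2000000 in
/-- Let `f(z) = ∑_{n ≥ 1} a_n z^n` belong to the Dirichlet-type space `D_t`
with `t ≠ 0`, i.e. `∑ |a_n|² (n+1)^t < ∞`.  If the system `{f(z^k)}_{k ∈ ℕ}` is orthogonal
in `D_t`, i.e. `⟨f(z^k), f(z^l)⟩_{D_t} = 0` for all `k ≠ l`, then `f(z) = c z^N` for some
constant `c` and positive integer `N`. -/
theorem power_dilation_orthogonal_monomial (t : ℝ) (ht : t ≠ 0) (a : ℕ → ℂ) (ha0 : a 0 = 0)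
    (hmem : Summable fun n : ℕ => ‖a n‖ ^ 2 * (((n : ℝ) + 1) ^ t))
    (horth : ∀ k l : ℕ, 0 < k → 0 < l → k ≠ l → dilationInner t a k l = 0) :
    ∃ (N : ℕ) (c : ℂ), 0 < N ∧ a N = c ∧ ∀ n : ℕ, n ≠ N → a n = 0 := by
  classical
  by_cases hz : ∀ n : ℕ, a n = 0
  · exact ⟨1, 0, one_pos, hz 1, fun n _ => hz n⟩
  push_neg at hz
  set N := Nat.find hz with hNdef
  have hNne : a N ≠ 0 := Nat.find_spec hz
  have hmin : ∀ m, m < N → a m = 0 := by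
    intro m hm
    by_contra h
    exact Nat.find_min hz hm h
  have hN0 : 0 < N := by
    rcases Nat.eq_zero_or_pos N with h | h
    · rw [h] at hNne; exact absurd ha0 hNne
    · exact h
  have hN0' : (0:ℝ) < (N:ℝ) := by exact_mod_cast hN0
  -- the weighted coefficient sequence
  set c : ℕ → ℂ := fun n => a n * ((((n : ℝ) ^ (t / 2) : ℝ)) : ℂ) with hcdef
  have hc0 : c 0 = 0 := by rw [hcdef]; simp [ha0]
  have hcmin : ∀ m, m < N → c m = 0 := by
    intro m hm
    rw [hcdef]
    simp [hmin m hm]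
  have hcN : c N ≠ 0 := by
    rw [hcdef]
    apply mul_ne_zero hNne
    simp only [ne_eq, Complex.ofReal_eq_zero]
    exact ne_of_gt (Real.rpow_pos_of_pos hN0' _)
  have hcnorm : ∀ m : ℕ, 0 < m → ‖c m‖ ^ 2 = ‖a m‖ ^ 2 * ((m : ℝ)) ^ t := by
    intro m hm
    have hm0 : (0:ℝ) < (m:ℝ) := by exact_mod_cast hm
    rw [hcdef]
    simp only [norm_mul, Complex.norm_real, Real.norm_eq_abs,
      _root_.abs_of_pos (Real.rpow_pos_of_pos hm0 (t/2))]
    rw [mul_pow]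
    congr 1
    rw [sq, ← Real.rpow_add hm0]
    norm_num
  have hcsq : Summable fun m : ℕ => ‖c m‖ ^ 2 := by
    have hb : Summable fun m : ℕ => (2:ℝ) ^ |t| * (‖a m‖ ^ 2 * (((m:ℝ) + 1) ^ t)) :=
      hmem.mul_left _
    apply Summable.of_nonneg_of_le (fun m => by positivity) _ hb
    intro m
    rcases Nat.eq_zero_or_pos m with rfl | hm
    · rw [hc0]
      simp only [norm_zero]
      norm_num
      positivity
    · rw [hcnorm m hm]
      have hm0 : (0:ℝ) < (m:ℝ) := by exact_mod_cast hm
      have hm1 : (1:ℝ) ≤ (m:ℝ) := by exact_mod_cast hm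
      have key : ((m:ℝ)) ^ t ≤ (2:ℝ) ^ |t| * (((m:ℝ) + 1) ^ t) :=
        rpow_ratio_le' t hm0 (by linarith) (by linarith) one_le_two
      calc ‖a m‖ ^ 2 * ((m:ℝ)) ^ t ≤ ‖a m‖ ^ 2 * ((2:ℝ) ^ |t| * (((m:ℝ) + 1) ^ t)) :=
            mul_le_mul_of_nonneg_left key (by positivity)
        _ = (2:ℝ) ^ |t| * (‖a m‖ ^ 2 * (((m:ℝ) + 1) ^ t)) := by ring
  -- pointwise product formula
  have hprod : ∀ u v j : ℕ, 0 < u → 0 < v →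
      c ((j + 1) * u) * (starRingEnd ℂ) (c ((j + 1) * v))
      = a ((j + 1) * u) * (starRingEnd ℂ) (a ((j + 1) * v)) *
        (((((j:ℝ) + 1) ^ t * (((u:ℝ) * (v:ℝ)) ^ (t/2)) : ℝ)) : ℂ) := by
    intro u v j hu hv
    have hu0 : (0:ℝ) < (u:ℝ) := by exact_mod_cast hu
    have hv0 : (0:ℝ) < (v:ℝ) := by exact_mod_cast hv
    have harith : ((((j + 1) * u : ℕ):ℝ)) ^ (t/2) * ((((j + 1) * v : ℕ):ℝ)) ^ (t/2)
        = ((j:ℝ) + 1) ^ t * (((u:ℝ) * (v:ℝ)) ^ (t/2)) := by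
      push_cast
      rw [← Real.mul_rpow (by positivity) (by positivity)]
      rw [show (((j:ℝ)+1) * (u:ℝ)) * ((((j:ℝ)+1)) * (v:ℝ))
          = (((j:ℝ)+1) ^ (2:ℕ)) * ((u:ℝ) * (v:ℝ)) by ring]
      rw [Real.mul_rpow (by positivity) (by positivity)]
      congr 1
      rw [← Real.rpow_natCast ((j:ℝ)+1) 2, ← Real.rpow_mul (by positivity)]
      congr 1
      ring
    rw [hcdef]
    simp only [map_mul, Complex.conj_ofReal]
    rw [← harith]
    push_cast
    ring
  -- summability of the correlation sequences
  have hinjmul : ∀ u : ℕ, 0 < u → Function.Injective (fun j : ℕ => j * u) := by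
    intro u hu j k h
    simp only [] at h
    exact Nat.eq_of_mul_eq_mul_right hu h
  have hhalf : ∀ u v : ℕ, 0 < u → 0 < v →
      Summable (fun j : ℕ => (‖c (j * u)‖ ^ 2 + ‖c (j * v)‖ ^ 2) / 2) := by
    intro u v hu hv
    exact ((hcsq.comp_injective (hinjmul u hu)).add
      (hcsq.comp_injective (hinjmul v hv))).div_const 2
  have hccbound : ∀ u v j : ℕ,
      ‖c (j * u) * (starRingEnd ℂ) (c (j * v))‖ ≤ (‖c (j * u)‖ ^ 2 + ‖c (j * v)‖ ^ 2) / 2 := by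
    intro u v j
    rw [norm_mul, RCLike.norm_conj]
    nlinarith [sq_nonneg (‖c (j * u)‖ - ‖c (j * v)‖), norm_nonneg (c (j * u)),
      norm_nonneg (c (j * v))]
  have hsum_cc : ∀ u v : ℕ, 0 < u → 0 < v →
      Summable (fun j : ℕ => c (j * u) * (starRingEnd ℂ) (c (j * v))) := by
    intro u v hu hv
    exact Summable.of_norm_bounded (hhalf u v hu hv) (hccbound u v)
  have hwt : ∀ u j : ℕ, |((N : ℝ) / ((j * u : ℕ) : ℝ))| ≤ (N : ℝ) := by
    intro u j
    rcases Nat.eq_zero_or_pos (j * u) with h | h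
    · rw [h]
      simp
    · have h1 : (1:ℝ) ≤ ((j * u : ℕ) : ℝ) := by exact_mod_cast h
      rw [_root_.abs_of_nonneg (by positivity)]
      rw [div_le_iff₀ (by linarith)]
      nlinarith [hN0'.le]
  have hsum_ccw : ∀ u v : ℕ, 0 < u → 0 < v →
      Summable (fun j : ℕ => c (j * u) * (starRingEnd ℂ) (c (j * v)) *
        (((N : ℝ) / ((j * u : ℕ) : ℝ)) : ℂ)) := by
    intro u v hu hv
    apply Summable.of_norm_bounded (((hhalf u v hu hv).mul_left ((N:ℝ))))
    intro j
    rw [norm_mul, ← Complex.ofReal_div, Complex.norm_real, Real.norm_eq_abs]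
    calc ‖c (j * u) * (starRingEnd ℂ) (c (j * v))‖ * |((N : ℝ) / ((j * u : ℕ) : ℝ))|
        ≤ ((‖c (j * u)‖ ^ 2 + ‖c (j * v)‖ ^ 2) / 2) * (N : ℝ) :=
          mul_le_mul (hccbound u v j) (hwt u j) (abs_nonneg _) (by positivity)
      _ = (N : ℝ) * ((‖c (j * u)‖ ^ 2 + ‖c (j * v)‖ ^ 2) / 2) := by ring
  -- the two families of orthogonality relations for `c`
  have hH : ∀ u v : ℕ, 0 < u → 0 < v → Nat.Coprime u v → u ≠ v →
      (∑' j : ℕ, c (j * u) * (starRingEnd ℂ) (c (j * v)) = 0) ∧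
      (∑' j : ℕ, c (j * u) * (starRingEnd ℂ) (c (j * v)) *
        (((N : ℝ) / ((j * u : ℕ) : ℝ)) : ℂ) = 0) := by
    intro u v hu hv hco hne
    have hu0 : (0:ℝ) < (u:ℝ) := by exact_mod_cast hu
    obtain ⟨hM0, hM1⟩ := moments ht hmem horth hu hv hco hne
    constructor
    · rw [Summable.tsum_eq_zero_add (hsum_cc u v hu hv)]
      have h00 : c (0 * u) * (starRingEnd ℂ) (c (0 * v)) = 0 := by
        rw [Nat.zero_mul, hc0]
        simp
      rw [h00, zero_add]
      have hterm : ∀ j : ℕ, c ((j + 1) * u) * (starRingEnd ℂ) (c ((j + 1) * v))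
          = ((((u:ℝ) * (v:ℝ)) ^ (t/2) : ℝ) : ℂ) *
            (a ((j + 1) * u) * (starRingEnd ℂ) (a ((j + 1) * v)) *
              (((((j:ℝ) + 1) ^ t : ℝ)) : ℂ)) := by
        intro j
        rw [hprod u v j hu hv]
        push_cast
        ring
      rw [tsum_congr hterm, tsum_mul_left, hM0, mul_zero]
    · rw [Summable.tsum_eq_zero_add (hsum_ccw u v hu hv)]
      have h00 : c (0 * u) * (starRingEnd ℂ) (c (0 * v)) *
          (((N : ℝ) / ((0 * u : ℕ) : ℝ)) : ℂ) = 0 := by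
        rw [Nat.zero_mul, hc0]
        simp
      rw [h00, zero_add]
      have hterm : ∀ j : ℕ, c ((j + 1) * u) * (starRingEnd ℂ) (c ((j + 1) * v)) *
          (((N : ℝ) / (((j + 1) * u : ℕ) : ℝ)) : ℂ)
          = (((((u:ℝ) * (v:ℝ)) ^ (t/2) * (N:ℝ) / (u:ℝ)) : ℝ) : ℂ) *
            (a ((j + 1) * u) * (starRingEnd ℂ) (a ((j + 1) * v)) *
              (((((j:ℝ) + 1) ^ (t - 1) : ℝ)) : ℂ)) := by
        intro j
        rw [hprod u v j hu hv]
        have hj1 : (0:ℝ) < (j:ℝ) + 1 := by positivity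
        have hw : ((((j:ℝ) + 1) ^ t * (((u:ℝ) * (v:ℝ)) ^ (t/2))) *
            ((N : ℝ) / (((j + 1) * u : ℕ) : ℝ)) : ℝ)
            = ((((u:ℝ) * (v:ℝ)) ^ (t/2) * (N:ℝ) / (u:ℝ)) * (((j:ℝ) + 1) ^ (t - 1)) : ℝ) := by
          rw [Real.rpow_sub_one hj1.ne']
          push_cast
          field_simp
        calc a ((j + 1) * u) * (starRingEnd ℂ) (a ((j + 1) * v)) *
              (((((j:ℝ) + 1) ^ t * (((u:ℝ) * (v:ℝ)) ^ (t/2)) : ℝ)) : ℂ) *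
              (((N : ℝ) / (((j + 1) * u : ℕ) : ℝ)) : ℂ)
            = a ((j + 1) * u) * (starRingEnd ℂ) (a ((j + 1) * v)) *
              ((((((j:ℝ) + 1) ^ t * (((u:ℝ) * (v:ℝ)) ^ (t/2))) *
                ((N : ℝ) / (((j + 1) * u : ℕ) : ℝ)) : ℝ)) : ℂ) := by
              push_cast
              ring
          _ = (((((u:ℝ) * (v:ℝ)) ^ (t/2) * (N:ℝ) / (u:ℝ)) : ℝ) : ℂ) *
              (a ((j + 1) * u) * (starRingEnd ℂ) (a ((j + 1) * v)) *
                (((((j:ℝ) + 1) ^ (t - 1) : ℝ)) : ℂ)) := by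
              rw [hw]
              push_cast
              ring
      rw [tsum_congr hterm, tsum_mul_left, hM1, mul_zero]
  -- the total square sum and the weighted square sum
  set ρ : ℝ := ∑' m : ℕ, ‖c m‖ ^ 2 with hρdef
  have hsumG : Summable fun j : ℕ => ‖c j‖ ^ 2 * ((N : ℝ) / (j : ℝ)) := by
    apply Summable.of_nonneg_of_le (fun j => by positivity) _ (hcsq.mul_left (N : ℝ))
    intro j
    have hdle : ((N : ℝ) / (j : ℝ)) ≤ (N : ℝ) := by
      rcases Nat.eq_zero_or_pos j with rfl | hj
      · simp
      · exact div_le_self hN0'.le (by exact_mod_cast hj)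
    calc ‖c j‖ ^ 2 * ((N : ℝ) / (j : ℝ)) ≤ ‖c j‖ ^ 2 * (N : ℝ) :=
          mul_le_mul_of_nonneg_left hdle (by positivity)
      _ = (N : ℝ) * ‖c j‖ ^ 2 := by ring
  set G : ℝ := ∑' j : ℕ, ‖c j‖ ^ 2 * ((N : ℝ) / (j : ℝ)) with hGdef
  -- the summable majorant for the triple sum
  set Hb : ℕ × ℕ → ℝ := fun x => (‖c x.1‖ * ((N : ℝ) / (x.1 : ℝ))) *
      ((‖c (x.2 * (N / Nat.gcd N x.1))‖ ^ 2 + ‖c (x.2 * (x.1 / Nat.gcd N x.1))‖ ^ 2) / 2)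
    with hHbdef
  have hnormFP1 : ∀ x : ℕ × ℕ, ‖FP N c (i1 N x)‖ ≤ Hb x := by
    intro x
    have hnrm : ‖FP N c (i1 N x)‖ = ‖c (x.2 * (N / Nat.gcd N x.1))‖ *
        ‖c (x.2 * (x.1 / Nat.gcd N x.1))‖ * ‖c x.1‖ * |((N : ℝ) / ((x.1 : ℕ) : ℝ))| := by
      show ‖c (x.2 * (N / Nat.gcd N x.1)) * (starRingEnd ℂ) (c (x.2 * (x.1 / Nat.gcd N x.1))) *
          c x.1 * (((N : ℝ) / ((x.1 : ℕ) : ℝ)) : ℂ)‖ = _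
      rw [norm_mul, norm_mul, norm_mul, RCLike.norm_conj, ← Complex.ofReal_div,
        Complex.norm_real, Real.norm_eq_abs]
    rw [hnrm, hHbdef]
    have habs : |((N : ℝ) / ((x.1 : ℕ) : ℝ))| = (N : ℝ) / (x.1 : ℝ) :=
      _root_.abs_of_nonneg (by positivity)
    rw [habs]
    have h1 : (0:ℝ) ≤ ‖c x.1‖ * ((N : ℝ) / (x.1 : ℝ)) := by positivity
    nlinarith [sq_nonneg (‖c (x.2 * (N / Nat.gcd N x.1))‖ - ‖c (x.2 * (x.1 / Nat.gcd N x.1))‖),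
      norm_nonneg (c (x.2 * (N / Nat.gcd N x.1))), norm_nonneg (c (x.2 * (x.1 / Nat.gcd N x.1))),
      norm_nonneg (c x.1), div_nonneg (Nat.cast_nonneg (α := ℝ) N) (Nat.cast_nonneg (α := ℝ) x.1)]
  have hq2 : Summable fun q : ℕ => ((1:ℝ) / (q : ℝ)) ^ 2 := by
    have h := Real.summable_one_div_nat_pow.mpr (show 1 < 2 by norm_num)
    apply h.congr
    intro q
    rw [div_pow, one_pow]
  have hsumcq : Summable fun q : ℕ => ‖c q‖ * ((N : ℝ) / (q : ℝ)) := by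
    have hb : Summable fun q : ℕ => (N:ℝ) * ((‖c q‖ ^ 2 + ((1:ℝ) / (q : ℝ)) ^ 2) / 2) :=
      ((hcsq.add hq2).div_const 2).mul_left _
    apply Summable.of_nonneg_of_le (fun q => by positivity) _ hb
    intro q
    have : ‖c q‖ * ((N:ℝ) / (q:ℝ)) = (N:ℝ) * (‖c q‖ * ((1:ℝ)/(q:ℝ))) := by ring
    rw [this]
    apply mul_le_mul_of_nonneg_left _ hN0'.le
    nlinarith [sq_nonneg (‖c q‖ - (1:ℝ)/(q:ℝ)), norm_nonneg (c q),
      div_nonneg (zero_le_one (α := ℝ)) (Nat.cast_nonneg (α := ℝ) q)]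
  have hρ0 : (0:ℝ) ≤ ρ := tsum_nonneg (fun m => by positivity)
  have hHbsum : Summable Hb := by
    rw [summable_prod_of_nonneg (fun x => by rw [hHbdef]; positivity)]
    constructor
    · intro q
      rcases Nat.eq_zero_or_pos q with rfl | hq
      · have hzero : (fun j : ℕ => Hb (0, j)) = fun _ => 0 := by
          funext j
          rw [hHbdef]
          simp [hc0]
        rw [hzero]
        exact summable_zero
      · simp only [hHbdef]
        apply Summable.mul_left
        exact ((hcsq.comp_injective (hinjmul _ (Upos hN0 q))).add
          (hcsq.comp_injective (hinjmul _ (Vpos hN0 hq)))).div_const 2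
    · have hnn : ∀ q : ℕ, 0 ≤ ∑' j, Hb (q, j) :=
        fun q => tsum_nonneg (fun j => by rw [hHbdef]; positivity)
      apply Summable.of_nonneg_of_le hnn _ (hsumcq.mul_right ρ)
      intro q
      rcases Nat.eq_zero_or_pos q with rfl | hq
      · have hzero : (fun j : ℕ => Hb (0, j)) = fun _ => 0 := by
          funext j
          rw [hHbdef]
          simp [hc0]
        rw [hzero, tsum_zero]
        positivity
      · have hsf : Summable fun j : ℕ => ‖c (j * (N / Nat.gcd N q))‖ ^ 2 :=
          hcsq.comp_injective (hinjmul _ (Upos hN0 q))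
        have hsg : Summable fun j : ℕ => ‖c (j * (q / Nat.gcd N q))‖ ^ 2 :=
          hcsq.comp_injective (hinjmul _ (Vpos hN0 hq))
        have hSf : ∑' j : ℕ, ‖c (j * (N / Nat.gcd N q))‖ ^ 2 ≤ ρ := by
          rw [hρdef]
          exact Summable.tsum_le_tsum_of_inj _ (hinjmul _ (Upos hN0 q))
            (fun m _ => by positivity) (fun j => le_refl _) hsf hcsq
        have hSg : ∑' j : ℕ, ‖c (j * (q / Nat.gcd N q))‖ ^ 2 ≤ ρ := by
          rw [hρdef]
          exact Summable.tsum_le_tsum_of_inj _ (hinjmul _ (Vpos hN0 hq))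
            (fun m _ => by positivity) (fun j => le_refl _) hsg hcsq
        have hinner : ∑' j : ℕ, ((‖c (j * (N / Nat.gcd N q))‖ ^ 2 +
            ‖c (j * (q / Nat.gcd N q))‖ ^ 2) / 2) ≤ ρ := by
          rw [tsum_div_const, Summable.tsum_add hsf hsg]
          linarith
        calc ∑' j : ℕ, Hb (q, j)
            = (‖c q‖ * ((N : ℝ) / (q : ℝ))) * ∑' j : ℕ, ((‖c (j * (N / Nat.gcd N q))‖ ^ 2 +
                ‖c (j * (q / Nat.gcd N q))‖ ^ 2) / 2) := by
              simp only [hHbdef]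
              rw [tsum_mul_left]
          _ ≤ (‖c q‖ * ((N : ℝ) / (q : ℝ))) * ρ := by
              apply mul_le_mul_of_nonneg_left hinner (by positivity)
  -- summability of the triple sums
  have hsumPhi : Summable fun x : ℕ × ℕ => FP N c (i1 N x) :=
    Summable.of_norm_bounded hHbsum hnormFP1
  have hsumF : Summable (FP N c) :=
    ((Equiv.ofBijective (i1 N) (i1_bij hN0)).summable_iff).mp hsumPhi
  have hsumPsi : Summable fun x : ℕ × ℕ => FP N c (i2 N x) :=
    ((Equiv.ofBijective (i2 N) (i2_bij hN0)).summable_iff).mpr hsumF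
  have he1 : ∑' x : ℕ × ℕ, FP N c (i1 N x) = ∑' p : PIdx N, FP N c p :=
    (Equiv.ofBijective (i1 N) (i1_bij hN0)).tsum_eq (FP N c)
  have he2 : ∑' x : ℕ × ℕ, FP N c (i2 N x) = ∑' p : PIdx N, FP N c p :=
    (Equiv.ofBijective (i2 N) (i2_bij hN0)).tsum_eq (FP N c)
  -- evaluation of the first parametrized sum
  have hPhiEval : ∑' x : ℕ × ℕ, FP N c (i1 N x) = c N * ((ρ : ℝ) : ℂ) := by
    rw [Summable.tsum_prod' hsumPhi (fun q => hsumPhi.prod_factor q)]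
    have hslice : ∀ q : ℕ, q ≠ N → ∑' j : ℕ, FP N c (i1 N (q, j)) = 0 := by
      intro q hq
      rcases Nat.eq_zero_or_pos q with rfl | hq0
      · have hzero : (fun j : ℕ => FP N c (i1 N (0, j))) = fun _ => 0 := by
          funext j
          show c (j * (N / Nat.gcd N 0)) * (starRingEnd ℂ) (c (j * (0 / Nat.gcd N 0))) *
              c 0 * (((N : ℝ) / ((0 : ℕ) : ℝ)) : ℂ) = 0
          rw [hc0]
          simp
        rw [hzero, tsum_zero]
      · have hterm : ∀ j : ℕ, FP N c (i1 N (q, j)) = (c q * (((N : ℝ) / ((q : ℕ) : ℝ)) : ℂ)) *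
            (c (j * (N / Nat.gcd N q)) * (starRingEnd ℂ) (c (j * (q / Nat.gcd N q)))) := by
          intro j
          show c (j * (N / Nat.gcd N q)) * (starRingEnd ℂ) (c (j * (q / Nat.gcd N q))) *
              c q * (((N : ℝ) / ((q : ℕ) : ℝ)) : ℂ) = _
          ring
        rw [tsum_congr hterm, tsum_mul_left,
          (hH (N / Nat.gcd N q) (q / Nat.gcd N q) (Upos hN0 q) (Vpos hN0 hq0)
            (Nat.coprime_div_gcd_div_gcd (Nat.gcd_pos_of_pos_left q hN0)) (UVne hN0 hq)).1,
          mul_zero]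
    rw [tsum_eq_single N hslice]
    have hterm : ∀ j : ℕ, FP N c (i1 N (N, j)) = c N * ((‖c j‖ ^ 2 : ℝ) : ℂ) := by
      intro j
      show c (j * (N / Nat.gcd N N)) * (starRingEnd ℂ) (c (j * (N / Nat.gcd N N))) *
          c N * (((N : ℝ) / ((N : ℕ) : ℝ)) : ℂ) = _
      rw [Nat.gcd_self, Nat.div_self hN0, mul_one]
      have hdiv : (((N : ℝ) : ℂ) / ((N : ℝ) : ℂ)) = 1 := by
        apply div_self
        exact_mod_cast hN0'.ne'
      calc c j * (starRingEnd ℂ) (c j) * c N * (((N : ℝ) : ℂ) / ((N : ℝ) : ℂ))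
          = (c j * (starRingEnd ℂ) (c j)) * c N * 1 := by rw [hdiv]
        _ = c N * ((‖c j‖ ^ 2 : ℝ) : ℂ) := by rw [mul_conj_norm]; ring
    rw [tsum_congr hterm, tsum_mul_left, ← Complex.ofReal_tsum]
  -- evaluation of the second parametrized sum
  have hPsiEval : ∑' x : ℕ × ℕ, FP N c (i2 N x) = c N * ((G : ℝ) : ℂ) := by
    rw [Summable.tsum_prod' hsumPsi (fun m => hsumPsi.prod_factor m)]
    have hslice : ∀ m : ℕ, m ≠ N → ∑' j : ℕ, FP N c (i2 N (m, j)) = 0 := by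
      intro m hm
      rcases Nat.eq_zero_or_pos m with rfl | hm0
      · have hzero : (fun j : ℕ => FP N c (i2 N (0, j))) = fun _ => 0 := by
          funext j
          show c 0 * (starRingEnd ℂ) (c (j * (0 / Nat.gcd N 0))) *
              c (j * (N / Nat.gcd N 0)) * (((N : ℝ) / ((j * (N / Nat.gcd N 0) : ℕ) : ℝ)) : ℂ) = 0
          rw [hc0]
          simp
        rw [hzero, tsum_zero]
      · have hterm : ∀ j : ℕ, FP N c (i2 N (m, j)) = c m *
            (c (j * (N / Nat.gcd N m)) * (starRingEnd ℂ) (c (j * (m / Nat.gcd N m))) *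
              (((N : ℝ) / ((j * (N / Nat.gcd N m) : ℕ) : ℝ)) : ℂ)) := by
          intro j
          show c m * (starRingEnd ℂ) (c (j * (m / Nat.gcd N m))) *
              c (j * (N / Nat.gcd N m)) * (((N : ℝ) / ((j * (N / Nat.gcd N m) : ℕ) : ℝ)) : ℂ) = _
          ring
        rw [tsum_congr hterm, tsum_mul_left,
          (hH (N / Nat.gcd N m) (m / Nat.gcd N m) (Upos hN0 m) (Vpos hN0 hm0)
            (Nat.coprime_div_gcd_div_gcd (Nat.gcd_pos_of_pos_left m hN0)) (UVne hN0 hm)).2,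
          mul_zero]
    rw [tsum_eq_single N hslice]
    have hterm : ∀ j : ℕ, FP N c (i2 N (N, j)) =
        c N * ((‖c j‖ ^ 2 * ((N : ℝ) / (j : ℝ)) : ℝ) : ℂ) := by
      intro j
      show c N * (starRingEnd ℂ) (c (j * (N / Nat.gcd N N))) *
          c (j * (N / Nat.gcd N N)) * (((N : ℝ) / ((j * (N / Nat.gcd N N) : ℕ) : ℝ)) : ℂ) = _
      rw [Nat.gcd_self, Nat.div_self hN0, mul_one]
      calc c N * (starRingEnd ℂ) (c j) * c j * (((N : ℝ) : ℂ) / ((j : ℝ) : ℂ))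
          = (c j * (starRingEnd ℂ) (c j)) * (c N * (((N : ℝ) : ℂ) / ((j : ℝ) : ℂ))) := by ring
        _ = ((‖c j‖ ^ 2 : ℝ) : ℂ) * (c N * (((N : ℝ) : ℂ) / ((j : ℝ) : ℂ))) := by
            rw [mul_conj_norm]
        _ = c N * ((‖c j‖ ^ 2 * ((N : ℝ) / (j : ℝ)) : ℝ) : ℂ) := by
            push_cast
            ring
    rw [tsum_congr hterm, tsum_mul_left, ← Complex.ofReal_tsum]
  -- the two evaluations agree
  have hρG : ρ = G := by
    have h := hPhiEval.symm.trans (he1.trans (he2.symm.trans hPsiEval))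
    have h2 := mul_left_cancel₀ hcN h
    exact_mod_cast h2
  -- conclude : all coefficients beyond `N` vanish
  have hdsum : Summable fun j : ℕ => ‖c j‖ ^ 2 - ‖c j‖ ^ 2 * ((N : ℝ) / (j : ℝ)) :=
    hcsq.sub hsumG
  have hdzero : ∑' j : ℕ, (‖c j‖ ^ 2 - ‖c j‖ ^ 2 * ((N : ℝ) / (j : ℝ))) = 0 := by
    rw [Summable.tsum_sub hcsq hsumG, ← hρdef, ← hGdef, hρG, sub_self]
  have hnn : ∀ j : ℕ, 0 ≤ ‖c j‖ ^ 2 - ‖c j‖ ^ 2 * ((N : ℝ) / (j : ℝ)) := by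
    intro j
    rcases lt_trichotomy j N with h | h | h
    · rw [hcmin j h]
      simp
    · rw [h]
      rw [div_self hN0'.ne']
      simp
    · have hj0 : (0:ℝ) < (j:ℝ) := lt_trans hN0' (by exact_mod_cast h)
      have hdle : ((N : ℝ) / (j : ℝ)) ≤ 1 := by
        rw [div_le_one hj0]
        exact_mod_cast h.le
      nlinarith [sq_nonneg ‖c j‖]
  have hall : ∀ j : ℕ, ‖c j‖ ^ 2 - ‖c j‖ ^ 2 * ((N : ℝ) / (j : ℝ)) = 0 := by
    intro j
    have hle : ‖c j‖ ^ 2 - ‖c j‖ ^ 2 * ((N : ℝ) / (j : ℝ)) ≤ 0 := by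
      rw [← hdzero]
      exact Summable.le_tsum hdsum j (fun i _ => hnn i)
    exact le_antisymm hle (hnn j)
  refine ⟨N, a N, hN0, rfl, ?_⟩
  intro n hn
  rcases lt_trichotomy n N with h | h | h
  · exact hmin n h
  · exact absurd h hn
  · have hj0 : (0:ℝ) < (n:ℝ) := lt_trans hN0' (by exact_mod_cast h)
    have hdlt : ((N : ℝ) / (n : ℝ)) < 1 := by
      rw [div_lt_one hj0]
      exact_mod_cast h
    have h0 := hall n
    have hcz : ‖c n‖ ^ 2 = 0 := by
      by_contra hne
      have hpos : 0 < ‖c n‖ ^ 2 := lt_of_le_of_ne (by positivity) (Ne.symm hne)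
      nlinarith
    have hcn : c n = 0 := by
      rwa [pow_eq_zero_iff (by norm_num), norm_eq_zero] at hcz
    rw [hcdef] at hcn
    simp only [mul_eq_zero, Complex.ofReal_eq_zero] at hcn
    rcases hcn with h1 | h1
    · exact h1
    · exfalso
      exact (ne_of_gt (Real.rpow_pos_of_pos hj0 (t/2))) h1
end

section
/- Suppose {c_n}_{n≥1} is a sequence of complex numbers with Σ_{n≥1} |c_n|² (n+1)^t < ∞ for a fixed real t ≠ 0, and suppose that for every pair of coprime positive integers i, j with i·j > 1 and every positive integer k, Σ_{n≥1} conj(c_{ni}) c_{nj} (n·k·i·j + 1)^t = 0. Then Σ_{n≥1} conj(c_{ni}) c_{nj} (n·i·j)^t = 0 for all such pairs i, j. -/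
/-!
Replacing `k` by `m + 1` and dividing the hypothesis by `(m + 1) ^ t` shows that
`∑ conj(c_{ni}) c_{nj} (n i j + 1/(m+1)) ^ t = 0` for every `m`. As `m → ∞` these series
converge to the one in the conclusion by dominated convergence: since `n i j ≥ 1`, each term
is bounded by `2 ^ |t| |c_{ni}| |c_{nj}| (n i j) ^ t`, which is summable by Cauchy–Schwarz,
because `(n i j) ^ t` is, up to the constant `(i j) ^ (t/2)`, the geometric mean of `(n i) ^ t`
and `(n j) ^ t`, and both `|c_{nl}|² (n l) ^ t` are summable by the `D_t` hypothesis.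
-/

open Filter Topology

lemma Real.rpow_le_two_rpow_abs_mul_rpow {x y : ℝ} (t : ℝ) (hx : 0 < x) (hy : 0 < y)
    (hxy : x ≤ 2 * y) (hyx : y ≤ 2 * x) : x ^ t ≤ 2 ^ |t| * y ^ t := by
  rcases le_or_gt 0 t with ht | ht
  · calc x ^ t ≤ (2 * y) ^ t := Real.rpow_le_rpow hx.le hxy ht
      _ = 2 ^ |t| * y ^ t := by rw [Real.mul_rpow zero_le_two hy.le, abs_of_nonneg ht]
  · calc x ^ t ≤ (y / 2) ^ t := Real.rpow_le_rpow_of_nonpos (by positivity) (by linarith) ht.le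
      _ = 2 ^ |t| * y ^ t := by
        rw [Real.div_rpow hy.le zero_le_two, abs_of_neg ht, Real.rpow_neg zero_le_two,
          div_eq_inv_mul]

lemma Real.add_one_div_rpow {x m : ℝ} (t : ℝ) (hx : 0 ≤ x) (hm : 0 < m) :
    (x + 1 / m) ^ t = (m * x + 1) ^ t * (m ^ t)⁻¹ := by
  rw [show x + 1 / m = (m * x + 1) / m by field_simp, Real.div_rpow (by positivity) hm.le,
    div_eq_mul_inv]

lemma summable_mul_rpow_comp_mul {w : ℕ → ℝ} {t : ℝ} (hw : ∀ n, 0 ≤ w n)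
    (hsum : Summable fun n : ℕ => w n * ((n : ℝ) + 1) ^ t) {l : ℕ} (hl : 0 < l) :
    Summable fun n : ℕ => w ((n + 1) * l) * (((n : ℝ) + 1) * l) ^ t := by
  have hinj : Function.Injective fun n : ℕ => (n + 1) * l := fun m n h => by
    simpa using Nat.eq_of_mul_eq_mul_right hl h
  refine ((hsum.comp_injective hinj).mul_left (2 ^ |t|)).of_nonneg_of_le
    (fun n => by have := hw ((n + 1) * l); positivity) fun n => ?_
  have hpos : (0 : ℝ) < ((n : ℝ) + 1) * l := by positivity
  have hl1 : (1 : ℝ) ≤ l := by exact_mod_cast hl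
  have hle := Real.rpow_le_two_rpow_abs_mul_rpow t hpos
    (by positivity : (0 : ℝ) < ((n : ℝ) + 1) * l + 1) (by linarith) (by nlinarith)
  simp only [Function.comp_apply, Nat.cast_mul, Nat.cast_add, Nat.cast_one]
  calc w ((n + 1) * l) * (((n : ℝ) + 1) * l) ^ t
      ≤ w ((n + 1) * l) * (2 ^ |t| * (((n : ℝ) + 1) * l + 1) ^ t) :=
        mul_le_mul_of_nonneg_left hle (hw _)
    _ = _ := by ring

lemma summable_norm_mul_norm_mul_rpow {E : Type*} [SeminormedAddCommGroup E] {c : ℕ → E}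
    {t : ℝ} (hc : Summable fun n : ℕ => ‖c n‖ ^ 2 * ((n : ℝ) + 1) ^ t) {i j : ℕ} (hi : 0 < i)
    (hj : 0 < j) :
    Summable fun n : ℕ =>
      ‖c ((n + 1) * i)‖ * ‖c ((n + 1) * j)‖ * (((n : ℝ) + 1) * i * j) ^ t := by
  set u : ℕ → ℕ → ℝ := fun l n => ‖c ((n + 1) * l)‖ * (((n : ℝ) + 1) * l) ^ (t / 2)
  have hu_nonneg (l n : ℕ) : 0 ≤ u l n := by positivity
  have hu_sq {l : ℕ} (hl : 0 < l) : Summable fun n => u l n ^ (2 : ℝ) := by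
    refine (summable_mul_rpow_comp_mul (fun n => sq_nonneg ‖c n‖) hc hl).congr fun n => ?_
    rw [Real.rpow_two, mul_pow, ← Real.rpow_mul_natCast (by positivity)]
    norm_num
  have hprod := (Real.summable_mul_of_Lp_Lq_of_nonneg Real.HolderConjugate.two_two
    (hu_nonneg i) (hu_nonneg j) (hu_sq hi) (hu_sq hj)).mul_left (((i : ℝ) * j) ^ (t / 2))
  refine hprod.congr fun n => ?_
  set N : ℝ := (n : ℝ) + 1
  have hsplit :
      (N * i * j) ^ t = (N * i) ^ (t / 2) * (N * j) ^ (t / 2) * ((i : ℝ) * j) ^ (t / 2) := by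
    rw [← Real.mul_rpow (by positivity) (by positivity),
      ← Real.mul_rpow (by positivity) (by positivity),
      show N * i * (N * j) * (i * j) = (N * i * j) ^ 2 by ring,
      ← Real.rpow_natCast_mul (by positivity)]
    ring_nf
  rw [hsplit]
  ring

lemma tendsto_tsum_mul_rpow_add {ι : Type*} {l : Filter ι} {a : ℕ → ℂ} {x : ℕ → ℝ}
    {t : ℝ} {δ : ι → ℝ} (hx : ∀ n, 1 ≤ x n) (ha : Summable fun n => ‖a n‖ * x n ^ t)
    (hδ : Tendsto δ l (𝓝 0)) (hδ_mem : ∀ᶠ k in l, δ k ∈ Set.Icc 0 1) :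
    Tendsto (fun k => ∑' n, a n * (((x n + δ k) ^ t : ℝ) : ℂ)) l
      (𝓝 (∑' n, a n * ((x n ^ t : ℝ) : ℂ))) := by
  refine tendsto_tsum_of_dominated_convergence (ha.mul_left (2 ^ |t|)) (fun n => ?_) ?_
  · have hcont := Real.continuousAt_rpow_const (x n) t (Or.inl (by linarith [hx n]))
    have := hcont.tendsto.comp (by simpa using (tendsto_const_nhds (x := x n)).add hδ)
    exact tendsto_const_nhds.mul (Complex.continuous_ofReal.continuousAt.tendsto.comp this)
  · filter_upwards [hδ_mem] with k ⟨hδ0, hδ1⟩ n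
    have hxn := hx n
    rw [norm_mul, Complex.norm_real, Real.norm_of_nonneg (by positivity),
      mul_left_comm]
    exact mul_le_mul_of_nonneg_left (Real.rpow_le_two_rpow_abs_mul_rpow t (by linarith)
      (by linarith) (by linarith) (by linarith)) (norm_nonneg _)

theorem first_limit_identity_general (t : ℝ) (c : ℕ → ℂ)
    (hmem : Summable fun n : ℕ => ‖c n‖ ^ 2 * (((n : ℝ) + 1) ^ t))
    (horth : ∀ i j k : ℕ, 0 < i → 0 < j → 0 < k → Nat.Coprime i j → 1 < i * j →
      ∑' n : ℕ, (starRingEnd ℂ) (c ((n + 1) * i)) * c ((n + 1) * j) *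
        (((((n : ℝ) + 1) * k * i * j + 1) ^ t : ℝ) : ℂ) = 0) :
    ∀ i j : ℕ, 0 < i → 0 < j → Nat.Coprime i j → 1 < i * j →
      ∑' n : ℕ, (starRingEnd ℂ) (c ((n + 1) * i)) * c ((n + 1) * j) *
        (((((n : ℝ) + 1) * i * j) ^ t : ℝ) : ℂ) = 0 := by
  intro i j hi hj hcop hij
  have hx (n : ℕ) : (1 : ℝ) ≤ ((n : ℝ) + 1) * i * j := by
    have : (1 : ℝ) ≤ i * j := by exact_mod_cast hij.le
    nlinarith [(n.cast_nonneg : (0 : ℝ) ≤ n)]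
  have hsum : Summable fun n : ℕ => ‖(starRingEnd ℂ) (c ((n + 1) * i)) * c ((n + 1) * j)‖ *
      (((n : ℝ) + 1) * i * j) ^ t := by
    simpa only [norm_mul, RCLike.norm_conj] using summable_norm_mul_norm_mul_rpow hmem hi hj
  have hlim := tendsto_tsum_mul_rpow_add hx hsum tendsto_one_div_add_atTop_nhds_zero_nat
    (Eventually.of_forall fun m => ⟨by positivity,
      div_le_one_of_le₀ (by linarith [(m.cast_nonneg : (0 : ℝ) ≤ m)]) (by positivity)⟩)
  have hzero (m : ℕ) : ∑' n : ℕ, (starRingEnd ℂ) (c ((n + 1) * i)) * c ((n + 1) * j) *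
      (((((n : ℝ) + 1) * i * j + 1 / ((m : ℝ) + 1)) ^ t : ℝ) : ℂ) = 0 := by
    have hm : (0 : ℝ) < (m : ℝ) + 1 := by positivity
    have hterm (n : ℕ) : (starRingEnd ℂ) (c ((n + 1) * i)) * c ((n + 1) * j) *
        (((((n : ℝ) + 1) * i * j + 1 / ((m : ℝ) + 1)) ^ t : ℝ) : ℂ) =
        (starRingEnd ℂ) (c ((n + 1) * i)) * c ((n + 1) * j) *
          (((((n : ℝ) + 1) * (m + 1 : ℕ) * i * j + 1) ^ t : ℝ) : ℂ) *
          (((((m : ℝ) + 1) ^ t)⁻¹ : ℝ) : ℂ) := by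
      rw [Real.add_one_div_rpow t (zero_le_one.trans (hx n)) hm, Complex.ofReal_mul,
        ← mul_assoc]
      push_cast
      ring_nf
    rw [tsum_congr hterm, tsum_mul_right, horth i j (m + 1) hi hj m.succ_pos hcop hij, zero_mul]
  exact tendsto_nhds_unique (hlim.congr hzero) tendsto_const_nhds

/-- Suppose `{c_n}_{n ≥ 1}` is a sequence of complex numbers with
`∑_{n ≥ 1} |c_n|² (n+1)^t < ∞` for a fixed real `t ≠ 0`, and suppose that for every pair of
coprime positive integers `i, j` with `i·j > 1` and every positive integer `k`,
`∑_{n ≥ 1} conj(c_{ni}) c_{nj} (n·k·i·j + 1)^t = 0`.  Then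
`∑_{n ≥ 1} conj(c_{ni}) c_{nj} (n·i·j)^t = 0` for all such pairs `i, j`. -/
theorem first_limit_identity (t : ℝ) (ht : t ≠ 0) (c : ℕ → ℂ)
    (hmem : Summable fun n : ℕ => ‖c n‖ ^ 2 * (((n : ℝ) + 1) ^ t))
    (horth : ∀ i j k : ℕ, 0 < i → 0 < j → 0 < k → Nat.Coprime i j → 1 < i * j →
      ∑' n : ℕ, (starRingEnd ℂ) (c ((n + 1) * i)) * c ((n + 1) * j) *
        (((((n : ℝ) + 1) * k * i * j + 1) ^ t : ℝ) : ℂ) = 0) :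
    ∀ i j : ℕ, 0 < i → 0 < j → Nat.Coprime i j → 1 < i * j →
      ∑' n : ℕ, (starRingEnd ℂ) (c ((n + 1) * i)) * c ((n + 1) * j) *
        (((((n : ℝ) + 1) * i * j) ^ t : ℝ) : ℂ) = 0 :=
  first_limit_identity_general t c hmem horth
end

section
/- Suppose {c_n}_{n≥1} is a sequence of complex numbers with Σ_{n≥1} |c_n|² (n+1)^t < ∞ for a fixed real t ≠ 0, and suppose that for every pair of coprime positive integers i, j with i·j > 1 and every positive integer k, Σ_{n≥1} conj(c_{ni}) c_{nj} (n·k·i·j + 1)^t = 0. Then Σ_{n≥1} conj(c_{ni}) c_{nj} (n·i·j)^{t-1} = 0 for all such pairs i, j. -/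
/-!
Put `a n = conj (c ((n+1) i)) * c ((n+1) j)` and `x n = (n+1) i j ≥ 1`. Dividing the hypothesis
for `k` by `k ^ t` gives `∑ a n (x n + 1/k) ^ t = 0`. The sums are dominated by
`|a n| (x n + 1) ^ t`, which is summable by AM-GM and the hypothesis on `c`, so letting `k → ∞`
gives `∑ a n (x n) ^ t = 0`. Subtracting and multiplying by `k`, the difference quotients
`k ((x n + 1/k) ^ t - x n ^ t)` tend to `t (x n) ^ (t-1)`, and the mean value theorem bounds them by
`|t| 2 ^ |t| (x n + 1) ^ t`; dominated convergence once more gives `t ∑ a n (x n) ^ (t-1) = 0`.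
-/

open Filter Topology

lemma rpow_le_pow_abs_mul_rpow_of_le_mul {t u v K : ℝ} (hu : 0 < u) (hv : 0 < v) (hK : 1 ≤ K)
    (hvu : v ≤ K * u) (huv : u ≤ K * v) : v ^ t ≤ K ^ |t| * u ^ t := by
  have hK0 : 0 < K := by linarith
  rcases le_or_gt 0 t with ht | ht
  · calc v ^ t ≤ (K * u) ^ t := Real.rpow_le_rpow hv.le hvu ht
      _ = K ^ |t| * u ^ t := by rw [Real.mul_rpow hK0.le hu.le, abs_of_nonneg ht]
  · calc v ^ t ≤ (u / K) ^ t :=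
          Real.rpow_le_rpow_of_nonpos (by positivity) (by rwa [div_le_iff₀' hK0]) ht.le
      _ = K ^ |t| * u ^ t := by
          rw [Real.div_rpow hu.le hK0.le, abs_of_neg ht, Real.rpow_neg hK0.le, div_eq_inv_mul]

lemma rpow_le_two_pow_abs_mul_rpow_add_one {t x y : ℝ} (hx : 1 ≤ x) (hxy : x ≤ y)
    (hy : y ≤ x + 1) : y ^ t ≤ 2 ^ |t| * (x + 1) ^ t :=
  rpow_le_pow_abs_mul_rpow_of_le_mul (by linarith) (by linarith) one_le_two (by linarith)
    (by linarith)

lemma abs_inv_mul_rpow_add_sub_rpow_le {t x h : ℝ} (hx : 1 ≤ x) (h0 : 0 < h) (h1 : h ≤ 1) :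
    |h⁻¹ * ((x + h) ^ t - x ^ t)| ≤ |t| * (2 ^ |t| * (x + 1) ^ t) := by
  have hderiv : ∀ y ∈ Set.Icc x (x + 1),
      HasDerivWithinAt (fun y : ℝ => y ^ t) (t * y ^ (t - 1)) (Set.Icc x (x + 1)) y :=
    fun y hy => (Real.hasDerivAt_rpow_const (Or.inl (by linarith [hy.1]))).hasDerivWithinAt
  have hbound : ∀ y ∈ Set.Icc x (x + 1), ‖t * y ^ (t - 1)‖ ≤ |t| * (2 ^ |t| * (x + 1) ^ t) := by
    intro y ⟨hxy, hy⟩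
    have hy1 : 1 ≤ y := hx.trans hxy
    rw [Real.norm_eq_abs, abs_mul, abs_of_nonneg (Real.rpow_nonneg (by linarith) _)]
    gcongr
    calc y ^ (t - 1) ≤ y ^ t := Real.rpow_le_rpow_of_exponent_le hy1 (by linarith)
      _ ≤ 2 ^ |t| * (x + 1) ^ t := rpow_le_two_pow_abs_mul_rpow_add_one hx hxy hy
  have hmvt := (convex_Icc x (x + 1)).norm_image_sub_le_of_norm_hasDerivWithin_le hderiv hbound
    (Set.left_mem_Icc.2 (by linarith)) (⟨by linarith, by linarith⟩ : x + h ∈ Set.Icc x (x + 1))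
  rw [Real.norm_eq_abs, Real.norm_eq_abs, add_sub_cancel_left, abs_of_pos h0] at hmvt
  rw [abs_mul, abs_inv, abs_of_pos h0, inv_mul_le_iff₀ h0, mul_comm h]
  exact hmvt

lemma tsum_eq_zero_of_tendsto_of_norm_le {α β G : Type*} {l : Filter α} [l.NeBot]
    [NormedAddCommGroup G] [CompleteSpace G] {F : α → β → G} {f : β → G} {bound : β → ℝ}
    (hbound : Summable bound) (hF : ∀ b, Tendsto (F · b) l (𝓝 (f b)))
    (hle : ∀ a b, ‖F a b‖ ≤ bound b) (hzero : ∀ a, ∑' b, F a b = 0) : ∑' b, f b = 0 :=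
  tendsto_nhds_unique
    (tendsto_tsum_of_dominated_convergence hbound hF (Eventually.of_forall hle))
    (by simp only [hzero, tendsto_const_nhds])

lemma norm_mul_rpow_add_le {t s x : ℝ} (a : ℂ) (hx : 1 ≤ x) (hs0 : 0 ≤ s) (hs1 : s ≤ 1) :
    ‖a * (((x + s) ^ t : ℝ) : ℂ)‖ ≤ ‖a‖ * (2 ^ |t| * (x + 1) ^ t) := by
  rw [norm_mul, Complex.norm_real, Real.norm_eq_abs,
    abs_of_nonneg (Real.rpow_nonneg (by linarith) _)]
  gcongr
  exact rpow_le_two_pow_abs_mul_rpow_add_one hx (by linarith) (by linarith)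

section WeightedSums

variable {t : ℝ} {a : ℕ → ℂ} {x : ℕ → ℝ}

lemma summable_mul_rpow_add {s : ℝ} (hx : ∀ n, 1 ≤ x n)
    (hsum : Summable fun n => ‖a n‖ * (x n + 1) ^ t) (hs0 : 0 ≤ s) (hs1 : s ≤ 1) :
    Summable fun n => a n * (((x n + s) ^ t : ℝ) : ℂ) :=
  (hsum.mul_left (2 ^ |t|)).of_norm_bounded fun n =>
    (norm_mul_rpow_add_le (a n) (hx n) hs0 hs1).trans_eq (by ring)

lemma tsum_mul_rpow_eq_zero_of_tendsto (hx : ∀ n, 1 ≤ x n)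
    (hsum : Summable fun n => ‖a n‖ * (x n + 1) ^ t) {h : ℕ → ℝ} (h0 : ∀ k, 0 ≤ h k)
    (h1 : ∀ k, h k ≤ 1) (hlim : Tendsto h atTop (𝓝 0))
    (hzero : ∀ k, ∑' n, a n * (((x n + h k) ^ t : ℝ) : ℂ) = 0) :
    ∑' n, a n * ((x n ^ t : ℝ) : ℂ) = 0 := by
  refine tsum_eq_zero_of_tendsto_of_norm_le (l := atTop) (hsum.mul_left (2 ^ |t|)) (fun n => ?_)
    (fun k n => (norm_mul_rpow_add_le (a n) (hx n) (h0 k) (h1 k)).trans_eq (by ring)) hzero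
  have hrpow : Tendsto (fun k => (x n + h k) ^ t) atTop (𝓝 (x n ^ t)) := by
    simpa using (tendsto_const_nhds.add hlim).rpow_const (Or.inl (by linarith [hx n]))
  exact ((Complex.continuous_ofReal.tendsto _).comp hrpow).const_mul (a n)

lemma tsum_mul_rpow_sub_one_eq_zero_of_tendsto (ht : t ≠ 0) (hx : ∀ n, 1 ≤ x n)
    (hsum : Summable fun n => ‖a n‖ * (x n + 1) ^ t) {h : ℕ → ℝ} (h0 : ∀ k, 0 < h k)
    (h1 : ∀ k, h k ≤ 1) (hlim : Tendsto h atTop (𝓝 0))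
    (hzero : ∀ k, ∑' n, a n * (((x n + h k) ^ t : ℝ) : ℂ) = 0) :
    ∑' n, a n * ((x n ^ (t - 1) : ℝ) : ℂ) = 0 := by
  have hzero' : ∑' n, a n * ((x n ^ t : ℝ) : ℂ) = 0 :=
    tsum_mul_rpow_eq_zero_of_tendsto hx hsum (fun k => (h0 k).le) h1 hlim hzero
  have hquot : ∀ k, ∑' n, a n * (((h k)⁻¹ * ((x n + h k) ^ t - x n ^ t) : ℝ) : ℂ) = 0 := by
    intro k
    have e : ∀ n, a n * (((h k)⁻¹ * ((x n + h k) ^ t - x n ^ t) : ℝ) : ℂ) =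
        ((h k)⁻¹ : ℂ) * (a n * (((x n + h k) ^ t : ℝ) : ℂ) - a n * ((x n ^ t : ℝ) : ℂ)) := by
      intro n; push_cast; ring
    rw [tsum_congr e, tsum_mul_left,
      (summable_mul_rpow_add hx hsum (h0 k).le (h1 k)).tsum_sub
        (by simpa using summable_mul_rpow_add hx hsum le_rfl zero_le_one),
      hzero k, hzero', sub_zero, mul_zero]
  have hlim' : Tendsto h atTop (𝓝[≠] 0) :=
    tendsto_nhdsWithin_of_tendsto_nhds_of_eventually_within _ hlim
      (Eventually.of_forall fun k => (h0 k).ne')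
  have hderiv : ∑' n, a n * ((t * x n ^ (t - 1) : ℝ) : ℂ) = 0 := by
    refine tsum_eq_zero_of_tendsto_of_norm_le (l := atTop) (hsum.mul_left (|t| * 2 ^ |t|))
      (fun n => ?_) (fun k n => ?_) hquot
    · have hslope := (Real.hasDerivAt_rpow_const (p := t)
        (Or.inl (by linarith [hx n] : x n ≠ 0))).tendsto_slope_zero.comp hlim'
      exact ((Complex.continuous_ofReal.tendsto _).comp hslope).const_mul (a n)
    · rw [norm_mul, Complex.norm_real, Real.norm_eq_abs]
      calc ‖a n‖ * |(h k)⁻¹ * ((x n + h k) ^ t - x n ^ t)|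
          ≤ ‖a n‖ * (|t| * (2 ^ |t| * (x n + 1) ^ t)) := by
            gcongr; exact abs_inv_mul_rpow_add_sub_rpow_le (hx n) (h0 k) (h1 k)
        _ = |t| * 2 ^ |t| * (‖a n‖ * (x n + 1) ^ t) := by ring
  simp_rw [Complex.ofReal_mul, mul_left_comm _ (t : ℂ)] at hderiv
  rw [tsum_mul_left] at hderiv
  exact (mul_eq_zero.1 hderiv).resolve_left (Complex.ofReal_ne_zero.2 ht)

end WeightedSums

lemma summable_comp_mul_mul_rpow {t : ℝ} {f : ℕ → ℝ} (hf : ∀ n, 0 ≤ f n)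
    (hsum : Summable fun n : ℕ => f n * ((n : ℝ) + 1) ^ t) {m d : ℕ} (hm : 0 < m) (hd : 0 < d) :
    Summable fun n : ℕ => f ((n + 1) * m) * (((n : ℝ) + 1) * m * d + 1) ^ t := by
  have hinj : Function.Injective fun n : ℕ => (n + 1) * m := fun p q hpq =>
    Nat.succ_injective (Nat.eq_of_mul_eq_mul_right hm hpq)
  refine ((hsum.comp_injective hinj).mul_left ((d : ℝ) ^ |t|)).of_nonneg_of_le
    (fun n => mul_nonneg (hf _) (by positivity)) fun n => ?_
  have hd1 : (1 : ℝ) ≤ d := by exact_mod_cast hd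
  have hnm : (0 : ℝ) ≤ ((n : ℝ) + 1) * m := by positivity
  have hcomp : (((n : ℝ) + 1) * m * d + 1) ^ t ≤ (d : ℝ) ^ |t| * (((n : ℝ) + 1) * m + 1) ^ t :=
    rpow_le_pow_abs_mul_rpow_of_le_mul (by positivity) (by positivity) hd1 (by nlinarith)
      (by nlinarith [mul_nonneg hnm (by nlinarith : (0 : ℝ) ≤ d * d - 1)])
  calc f ((n + 1) * m) * (((n : ℝ) + 1) * m * d + 1) ^ t
      ≤ f ((n + 1) * m) * ((d : ℝ) ^ |t| * (((n : ℝ) + 1) * m + 1) ^ t) := by gcongr; exact hf _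
    _ = (d : ℝ) ^ |t| * (f ((n + 1) * m) * ((((n + 1) * m : ℕ) : ℝ) + 1) ^ t) := by
        push_cast; ring

lemma summable_mul_mul_of_summable_sq_mul {u v w : ℕ → ℝ} (hw : ∀ n, 0 ≤ w n)
    (hu : Summable fun n => u n ^ 2 * w n) (hv : Summable fun n => v n ^ 2 * w n) :
    Summable fun n => u n * v n * w n := by
  refine ((hu.add hv).mul_left (1 / 2)).of_norm_bounded fun n => ?_
  rw [Real.norm_eq_abs, abs_mul, abs_mul, abs_of_nonneg (hw n)]
  have hamgm : |u n| * |v n| ≤ 1 / 2 * (u n ^ 2 + v n ^ 2) := by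
    nlinarith [sq_nonneg (|u n| - |v n|), sq_abs (u n), sq_abs (v n)]
  calc |u n| * |v n| * w n ≤ 1 / 2 * (u n ^ 2 + v n ^ 2) * w n := by gcongr; exact hw n
    _ = _ := by ring

lemma tsum_mul_rpow_add_one_div_eq_zero {t κ : ℝ} {a : ℕ → ℂ} {x : ℕ → ℝ} (hx : ∀ n, 0 ≤ x n)
    (hκ : 0 < κ) (hzero : ∑' n, a n * (((x n * κ + 1) ^ t : ℝ) : ℂ) = 0) :
    ∑' n, a n * (((x n + 1 / κ) ^ t : ℝ) : ℂ) = 0 := by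
  have hscale : ∀ n, ((x n * κ + 1) ^ t : ℝ) = κ ^ t * (x n + 1 / κ) ^ t := fun n => by
    rw [← Real.mul_rpow hκ.le (by have := hx n; positivity)]
    field_simp
  simp_rw [hscale, Complex.ofReal_mul, mul_left_comm _ ((κ ^ t : ℝ) : ℂ), tsum_mul_left] at hzero
  exact (mul_eq_zero.1 hzero).resolve_left
    (Complex.ofReal_ne_zero.2 (Real.rpow_pos_of_pos hκ t).ne')

/-- Suppose `{c_n}_{n ≥ 1}` is a sequence of complex numbers with
`∑_{n ≥ 1} |c_n|² (n+1)^t < ∞` for a fixed real `t ≠ 0`, and suppose that for every pair of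
coprime positive integers `i, j` with `i·j > 1` and every positive integer `k`,
`∑_{n ≥ 1} conj(c_{ni}) c_{nj} (n·k·i·j + 1)^t = 0`.  Then
`∑_{n ≥ 1} conj(c_{ni}) c_{nj} (n·i·j)^{t−1} = 0` for all such pairs `i, j`. -/
theorem second_limit_identity (t : ℝ) (ht : t ≠ 0) (c : ℕ → ℂ)
    (hmem : Summable fun n : ℕ => ‖c n‖ ^ 2 * (((n : ℝ) + 1) ^ t))
    (horth : ∀ i j k : ℕ, 0 < i → 0 < j → 0 < k → Nat.Coprime i j → 1 < i * j →
      ∑' n : ℕ, (starRingEnd ℂ) (c ((n + 1) * i)) * c ((n + 1) * j) *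
        (((((n : ℝ) + 1) * k * i * j + 1) ^ t : ℝ) : ℂ) = 0) :
    ∀ i j : ℕ, 0 < i → 0 < j → Nat.Coprime i j → 1 < i * j →
      ∑' n : ℕ, (starRingEnd ℂ) (c ((n + 1) * i)) * c ((n + 1) * j) *
        (((((n : ℝ) + 1) * i * j) ^ (t - 1) : ℝ) : ℂ) = 0 := by
  intro i j hi hj hcop hij
  have hx : ∀ n : ℕ, 1 ≤ ((n : ℝ) + 1) * i * j := fun n =>
    one_le_mul_of_one_le_of_one_le (one_le_mul_of_one_le_of_one_le (by simp) (by exact_mod_cast hi))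
      (by exact_mod_cast hj)
  have hsum : Summable fun n : ℕ =>
      ‖(starRingEnd ℂ) (c ((n + 1) * i)) * c ((n + 1) * j)‖ * (((n : ℝ) + 1) * i * j + 1) ^ t := by
    simp only [norm_mul, Complex.norm_conj]
    refine summable_mul_mul_of_summable_sq_mul (fun n => by positivity)
      (summable_comp_mul_mul_rpow (fun n => sq_nonneg ‖c n‖) hmem hi hj) ?_
    simpa only [mul_right_comm _ (j : ℝ) (i : ℝ)] using
      summable_comp_mul_mul_rpow (fun n => sq_nonneg ‖c n‖) hmem hj hi
  refine tsum_mul_rpow_sub_one_eq_zero_of_tendsto ht hx hsum (h := fun k : ℕ => 1 / ((k : ℝ) + 1))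
    (fun k => by positivity) (fun k => ?_) tendsto_one_div_add_atTop_nhds_zero_nat fun k => ?_
  · exact div_le_one_of_le₀ (by linarith [k.cast_nonneg (α := ℝ)]) (by positivity)
  · refine tsum_mul_rpow_add_one_div_eq_zero (fun n => by positivity) (by positivity) ?_
    convert horth i j (k + 1) hi hj k.succ_pos hcop hij using 6
    push_cast
    ring
end

section
/- Let f(z) = Σ_{n≥1} a_n z^n ∈ D_t with a_1 ≠ 0. Then the system {f(z^k)}_{k∈ℕ} is ω-independent in D_t: whenever Σ_{k=1}^∞ c_k f(z^k) converges to 0 in D_t-norm for scalars {c_k}, then c_k = 0 for all k. -/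
/-!
The `n`-th Taylor coefficient of the partial sums stabilises at `∑_{k ∣ n} c_k a_{n/k}` once
`K ≥ n`, and convergence to `0` in `D_t` forces every coefficient to tend to `0`. Hence
`∑_{k ∣ n} c_k a_{n/k} = 0` for all `n ≥ 1`; the divisor `k = n` contributes `c_n a_1` with
`a_1 ≠ 0`, so strong induction on `n` gives `c_n = 0`. The only analytic input is that the partial
sums lie in `D_t`, i.e. that `f(z^k) ∈ D_t`: the weight `(k m + 1)^t` carried by its coefficient
`a_m` is comparable with `(m + 1)^t`.
-/

open Filter

/-- The `n`-th Taylor coefficient of the partial sum `∑_{k=1}^{K} c_k f(z^k)`, where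
`f(z) = ∑_{n ≥ 1} a_n z^n`: it equals `∑_{k ∣ n, k ≤ K} c_k a_{n/k}`. -/
noncomputable def partialCoef (a c : ℕ → ℂ) (K n : ℕ) : ℂ :=
  ∑ k ∈ n.divisors.filter (· ≤ K), c k * a (n / k)

open Finset

lemma Real.rpow_le_one_add_rpow_mul_rpow {x y k : ℝ} (hy : 0 < y) (hyx : y ≤ x)
    (hxk : x ≤ k * y) (t : ℝ) : x ^ t ≤ (1 + k ^ t) * y ^ t := by
  have hk : 0 < k := pos_of_mul_pos_left (hy.trans_le (hyx.trans hxk)) hy.le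
  have hkt : 0 ≤ k ^ t * y ^ t := by positivity
  rcases le_total 0 t with ht | ht
  · calc x ^ t ≤ (k * y) ^ t := Real.rpow_le_rpow (hy.le.trans hyx) hxk ht
      _ = k ^ t * y ^ t := Real.mul_rpow hk.le hy.le
      _ ≤ (1 + k ^ t) * y ^ t := by linarith [Real.rpow_nonneg hy.le t]
  · calc x ^ t ≤ y ^ t := Real.rpow_le_rpow_of_nonpos hy hyx ht
      _ ≤ (1 + k ^ t) * y ^ t := by linarith

/-- The coefficient sequence of `f(z^k)` when `a` is that of `f(z)`. -/
def powDilation (k : ℕ) {M : Type*} [Zero M] (a : ℕ → M) (n : ℕ) : M :=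
  if k ∣ n then a (n / k) else 0

section WeightedL2

variable {𝕜 E : Type*} [NormedField 𝕜] [SeminormedAddCommGroup E] [NormedSpace 𝕜 E]

variable (𝕜 E) in
def weightedL2 (w : ℕ → ℝ) : Submodule 𝕜 (ℕ → E) where
  carrier := {f | Summable fun n => ‖f n‖ ^ 2 * w n}
  zero_mem' := by simp
  add_mem' {f g} hf hg := by
    refine Summable.of_norm_bounded ((hf.abs.add hg.abs).mul_left 2) fun n => ?_
    have hsq : ‖f n + g n‖ ^ 2 ≤ 2 * (‖f n‖ ^ 2 + ‖g n‖ ^ 2) :=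
      (pow_le_pow_left₀ (norm_nonneg _) (norm_add_le _ _) 2).trans add_sq_le
    simp only [Pi.add_apply, Real.norm_eq_abs, abs_mul, abs_pow, abs_norm]
    nlinarith [abs_nonneg (w n)]
  smul_mem' r f hf := by
    simpa [norm_smul, mul_pow, mul_assoc] using hf.mul_left (‖r‖ ^ 2)

lemma mem_weightedL2 {w : ℕ → ℝ} {f : ℕ → E} :
    f ∈ weightedL2 𝕜 E w ↔ Summable fun n => ‖f n‖ ^ 2 * w n :=
  Iff.rfl

lemma comp_succ_mem_weightedL2_rpow (t : ℝ) {f : ℕ → E}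
    (hf : f ∈ weightedL2 𝕜 E (fun n => ((n : ℝ) + 1) ^ t)) :
    (fun n => f (n + 1)) ∈ weightedL2 𝕜 E (fun n => ((n : ℝ) + 2) ^ t) := by
  refine ((summable_nat_add_iff 1).2 hf).congr fun n => ?_
  push_cast
  ring_nf

lemma powDilation_mem_weightedL2 (t : ℝ) {k : ℕ} (hk : 0 < k) {a : ℕ → E}
    (ha : a ∈ weightedL2 𝕜 E (fun n => ((n : ℝ) + 1) ^ t)) :
    powDilation k a ∈ weightedL2 𝕜 E (fun n => ((n : ℝ) + 1) ^ t) := by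
  have hinj : Function.Injective (k * ·) := mul_right_injective₀ hk.ne'
  have hsupp : ∀ n ∉ Set.range (k * ·), ‖powDilation k a n‖ ^ 2 * ((n : ℝ) + 1) ^ t = 0 := by
    intro n hn
    rw [powDilation, if_neg fun ⟨m, hm⟩ => hn ⟨m, hm.symm⟩]
    simp
  rw [mem_weightedL2, ← hinj.summable_iff hsupp]
  refine Summable.of_nonneg_of_le (fun m => by simp only [Function.comp_apply]; positivity)
    (fun m => ?_) (ha.mul_left (1 + (k : ℝ) ^ t))
  have hk1 : (1 : ℝ) ≤ k := by exact_mod_cast hk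
  have hweight : ((k * m : ℕ) + 1 : ℝ) ^ t ≤ (1 + (k : ℝ) ^ t) * ((m : ℝ) + 1) ^ t :=
    Real.rpow_le_one_add_rpow_mul_rpow (by positivity) (by push_cast; nlinarith)
      (by push_cast; nlinarith) t
  simp only [Function.comp_apply, powDilation, dvd_mul_right, if_true,
    Nat.mul_div_cancel_left _ hk]
  nlinarith [sq_nonneg ‖a m‖]

end WeightedL2

lemma partialCoef_succ_eq_sum_powDilation (a c : ℕ → ℂ) (K n : ℕ) :
    partialCoef a c K (n + 1) = ∑ k ∈ Icc 1 K, c k * powDilation k a (n + 1) := by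
  simp only [powDilation, mul_ite, mul_zero, ← sum_filter, partialCoef]
  congr 1
  ext k
  simp only [mem_filter, Nat.mem_divisors, mem_Icc]
  constructor
  · rintro ⟨⟨hk, -⟩, hkK⟩
    exact ⟨⟨Nat.pos_of_dvd_of_pos hk n.succ_pos, hkK⟩, hk⟩
  · rintro ⟨⟨-, hkK⟩, hk⟩
    exact ⟨⟨hk, n.succ_ne_zero⟩, hkK⟩

lemma summable_partialCoef_succ (t : ℝ) {a : ℕ → ℂ}
    (ha : Summable fun n : ℕ => ‖a n‖ ^ 2 * ((n : ℝ) + 1) ^ t) (c : ℕ → ℂ) (K : ℕ) :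
    Summable fun n : ℕ => ‖partialCoef a c K (n + 1)‖ ^ 2 * ((n : ℝ) + 2) ^ t := by
  have hmem : (∑ k ∈ Icc 1 K, c k • (fun n => powDilation k a (n + 1) : ℕ → ℂ)) ∈
      weightedL2 ℂ ℂ (fun n : ℕ => ((n : ℝ) + 2) ^ t) :=
    Submodule.sum_mem _ fun k hk => Submodule.smul_mem _ _ <| comp_succ_mem_weightedL2_rpow t
      (powDilation_mem_weightedL2 t (mem_Icc.1 hk).1 (mem_weightedL2.2 ha))
  have hcoef : (fun n => partialCoef a c K (n + 1)) =
      ∑ k ∈ Icc 1 K, c k • (fun n => powDilation k a (n + 1) : ℕ → ℂ) := by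
    ext n
    simp [partialCoef_succ_eq_sum_powDilation, Finset.sum_apply]
  rwa [← hcoef] at hmem

lemma partialCoef_of_le (a c : ℕ → ℂ) {K n : ℕ} (hn : n ≤ K) :
    partialCoef a c K n = ∑ k ∈ n.divisors, c k * a (n / k) := by
  rw [partialCoef, filter_true_of_mem fun k hk => (Nat.divisor_le hk).trans hn]

lemma tendsto_apply_zero_of_tendsto_tsum_zero {α ι : Type*} {l : Filter α} {F : α → ι → ℝ}
    (hF : ∀ x, Summable (F x)) (hF0 : ∀ x i, 0 ≤ F x i)
    (h : Tendsto (fun x => ∑' i, F x i) l (nhds 0)) (i : ι) :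
    Tendsto (fun x => F x i) l (nhds 0) :=
  squeeze_zero (fun x => hF0 x i) (fun x => (hF x).le_tsum i fun j _ => hF0 x j) h

lemma eq_zero_of_sum_divisors_mul_eq_zero {R : Type*} [Semiring R] [NoZeroDivisors R]
    {a c : ℕ → R} (ha1 : a 1 ≠ 0) (h : ∀ n, 0 < n → ∑ k ∈ n.divisors, c k * a (n / k) = 0) :
    ∀ n, 0 < n → c n = 0 := by
  intro n
  induction n using Nat.strong_induction_on with
  | _ n ih =>
  intro hn
  have hrest : ∑ k ∈ n.divisors.erase n, c k * a (n / k) = 0 := by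
    refine sum_eq_zero fun k hk => ?_
    obtain ⟨hkn, hk⟩ := mem_erase.1 hk
    rw [ih k ((Nat.divisor_le hk).lt_of_ne hkn) (Nat.pos_of_mem_divisors hk), zero_mul]
  have hn' := h n hn
  rw [← add_sum_erase _ _ (Nat.mem_divisors_self n hn.ne'), hrest, add_zero,
    Nat.div_self hn] at hn'
  exact (mul_eq_zero.1 hn').resolve_right ha1

theorem power_dilation_omega_independent_general (t : ℝ) (a : ℕ → ℂ) (ha1 : a 1 ≠ 0)
    (hmem : Summable fun n : ℕ => ‖a n‖ ^ 2 * (((n : ℝ) + 1) ^ t))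
    (c : ℕ → ℂ)
    (hconv : Tendsto
      (fun K : ℕ => ∑' n : ℕ, ‖partialCoef a c K (n + 1)‖ ^ 2 * (((n : ℝ) + 2) ^ t))
      atTop (nhds 0)) :
    ∀ k : ℕ, 0 < k → c k = 0 := by
  refine eq_zero_of_sum_divisors_mul_eq_zero ha1 fun n hn => ?_
  obtain ⟨m, rfl⟩ : ∃ m, n = m + 1 := ⟨n - 1, by omega⟩
  have hlim := tendsto_apply_zero_of_tendsto_tsum_zero (summable_partialCoef_succ t hmem c)
    (fun K n => by positivity) hconv m
  have hstable : ∀ᶠ K in atTop, ‖∑ k ∈ (m + 1).divisors, c k * a ((m + 1) / k)‖ ^ 2 *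
      ((m : ℝ) + 2) ^ t = ‖partialCoef a c K (m + 1)‖ ^ 2 * ((m : ℝ) + 2) ^ t :=
    (eventually_ge_atTop (m + 1)).mono fun K hK => by rw [partialCoef_of_le a c hK]
  have hzero := tendsto_nhds_unique (tendsto_const_nhds.congr' hstable) hlim
  have hweight : ((m : ℝ) + 2) ^ t ≠ 0 := by positivity
  simpa [hweight] using hzero

/-- Let `f(z) = ∑_{n ≥ 1} a_n z^n ∈ D_t` with `a_1 ≠ 0`.  Then the system
`{f(z^k)}_{k ∈ ℕ}` is ω-independent in `D_t`: whenever `∑_{k=1}^∞ c_k f(z^k)` converges to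
`0` in `D_t`-norm for scalars `{c_k}`, then `c_k = 0` for all `k`. -/
theorem power_dilation_omega_independent (t : ℝ) (a : ℕ → ℂ) (ha0 : a 0 = 0) (ha1 : a 1 ≠ 0)
    (hmem : Summable fun n : ℕ => ‖a n‖ ^ 2 * (((n : ℝ) + 1) ^ t))
    (c : ℕ → ℂ)
    (hconv : Tendsto
      (fun K : ℕ => ∑' n : ℕ, ‖partialCoef a c K (n + 1)‖ ^ 2 * (((n : ℝ) + 2) ^ t))
      atTop (nhds 0)) :
    ∀ k : ℕ, 0 < k → c k = 0 :=
  power_dilation_omega_independent_general t a ha1 hmem c hconv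
end

section
/- For t ≠ 0 and any nonzero f ∈ D_t, the system {f(z^k)}_{k∈ℕ} never forms a frame for D_t. That is, there are no constants A, B > 0 with A‖h‖² ≤ Σ_{k≥1} |⟨h, f(z^k)⟩_{D_t}|² ≤ B‖h‖² for all h ∈ D_t. -/
/-!
Test the frame inequality on the monomial `h = z^m`: the pairing `⟨z^m, f(z^k)⟩` is
`conj(a_{m/k}) (m+1)^t` when `k ∣ m` and `0` otherwise, so both frame bounds reduce to
`A ≤ (m+1)^t ∑_{d ∣ m} |a_d|² ≤ B` for every `m ≥ 1`. For `t > 0` the upper bound fails along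
the multiples of an index `d` with `a_d ≠ 0`. For `t < 0` the lower bound fails along the primes
`p`, where the divisor sum is `|a_1|² + |a_p|²` and `|a_p|² (p+1)^t` is a term of the convergent
series `‖f‖²`.
-/

/-- The `D_t`-inner product `⟨h, f(z^k)⟩_{D_t}` where `h = ∑_{n ≥ 1} b_n z^n` and
`f = ∑_{n ≥ 1} a_n z^n`: it equals `∑_{n ≥ 1} b_{nk} conj(a_n) (nk + 1)^t`. -/
noncomputable def dilationPairing (t : ℝ) (b a : ℕ → ℂ) (k : ℕ) : ℂ :=
  ∑' n : ℕ, b ((n + 1) * k) * (starRingEnd ℂ) (a (n + 1)) *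
    (((((n : ℝ) + 1) * k + 1) ^ t : ℝ) : ℂ)

open Filter Topology

/-- `‖h‖²` in `D_t` for `h = ∑_{n ≥ 1} b n z^n`. -/
noncomputable def dtNormSq (t : ℝ) (b : ℕ → ℂ) : ℝ :=
  ∑' n : ℕ, ‖b (n + 1)‖ ^ 2 * ((n : ℝ) + 2) ^ t

/-- `∑_{k ≥ 1} |⟨h, f(z^k)⟩|²`, the middle term of the frame inequality. -/
noncomputable def dilationEnergy (t : ℝ) (b a : ℕ → ℂ) : ℝ :=
  ∑' k : ℕ, ‖dilationPairing t b a (k + 1)‖ ^ 2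

noncomputable def divisorWeight (t : ℝ) (a : ℕ → ℂ) (m : ℕ) : ℝ :=
  ((m : ℝ) + 1) ^ t * ∑ d ∈ m.divisors, ‖a d‖ ^ 2

section single

variable (t : ℝ) {m : ℕ}

lemma summable_single_weighted_norm_sq :
    Summable fun n : ℕ => ‖(Pi.single m 1 : ℕ → ℂ) (n + 1)‖ ^ 2 * ((n : ℝ) + 2) ^ t := by
  refine summable_of_ne_finset_zero (s := {m - 1}) fun n hn => ?_
  have : n + 1 ≠ m := by simp only [Finset.mem_singleton] at hn; omega
  simp [this]

lemma dtNormSq_single (hm : m ≠ 0) : dtNormSq t (Pi.single m 1) = ((m : ℝ) + 1) ^ t := by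
  rw [dtNormSq, tsum_eq_single (m - 1)]
  · have hcast : ((m - 1 : ℕ) : ℝ) + 2 = (m : ℝ) + 1 := by
      rw [Nat.cast_sub (by omega)]; push_cast; ring
    simp [Nat.sub_add_cancel (Nat.one_le_iff_ne_zero.2 hm), hcast]
  · intro n hn
    have : n + 1 ≠ m := by omega
    simp [this]

lemma dilationPairing_single (a : ℕ → ℂ) (hm : m ≠ 0) (k : ℕ) :
    dilationPairing t (Pi.single m 1) a k =
      if k ∣ m then (starRingEnd ℂ) (a (m / k)) * ((((m : ℝ) + 1) ^ t : ℝ) : ℂ) else 0 := by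
  unfold dilationPairing
  split_ifs with hdvd
  · obtain ⟨q, rfl⟩ := hdvd
    have hk : 0 < k := Nat.pos_of_ne_zero (left_ne_zero_of_mul hm)
    obtain ⟨r, rfl⟩ := Nat.exists_eq_add_one_of_ne_zero (right_ne_zero_of_mul hm)
    rw [tsum_eq_single r, Nat.mul_div_cancel_left _ hk, mul_comm (r + 1) k, Pi.single_eq_same,
      one_mul]
    · push_cast
      ring_nf
    · intro n hn
      have : (n + 1) * k ≠ k * (r + 1) := by
        rw [mul_comm k]
        exact fun h => hn (Nat.succ_injective (Nat.eq_of_mul_eq_mul_right hk h))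
      simp [this]
  · have : ∀ n : ℕ, (n + 1) * k ≠ m := fun n h => hdvd ⟨n + 1, by rw [← h, mul_comm]⟩
    simp [this]

lemma dilationEnergy_single (a : ℕ → ℂ) (hm : m ≠ 0) :
    dilationEnergy t (Pi.single m 1) a =
      (((m : ℝ) + 1) ^ t) ^ 2 * ∑ d ∈ m.divisors, ‖a d‖ ^ 2 := by
  set g : ℕ → ℝ := fun k => ‖dilationPairing t (Pi.single m 1) a k‖ ^ 2
  have hg : ∀ k, g k =
      if k ∈ m.divisors then ‖a (m / k)‖ ^ 2 * (((m : ℝ) + 1) ^ t) ^ 2 else 0 := by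
    intro k
    simp only [g, dilationPairing_single t a hm, Nat.mem_divisors, hm, ne_eq, not_false_eq_true,
      and_true]
    split_ifs
    · rw [norm_mul, mul_pow, RCLike.norm_conj, Complex.norm_real,
        Real.norm_of_nonneg (by positivity)]
    · simp
  have hg0 : g 0 = 0 := by simp [hg]
  calc dilationEnergy t (Pi.single m 1) a = ∑' k, g k :=
        Nat.succ_injective.tsum_eq (f := g) fun k hk =>
          ⟨k - 1, Nat.succ_pred_eq_of_ne_zero (by rintro rfl; exact hk hg0)⟩
    _ = ∑ k ∈ m.divisors, g k := tsum_eq_sum fun k hk => by rw [hg, if_neg hk]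
    _ = ∑ k ∈ m.divisors, ‖a (m / k)‖ ^ 2 * (((m : ℝ) + 1) ^ t) ^ 2 :=
        Finset.sum_congr rfl fun k hk => by rw [hg, if_pos hk]
    _ = _ := by rw [← Finset.sum_mul, Nat.sum_div_divisors m fun d => ‖a d‖ ^ 2, mul_comm]

end single

section

variable (t : ℝ) (a : ℕ → ℂ)

lemma le_divisorWeight_le_of_frame {A B : ℝ}
    (hframe : ∀ b : ℕ → ℂ, (Summable fun n : ℕ => ‖b (n + 1)‖ ^ 2 * ((n : ℝ) + 2) ^ t) →
      A * dtNormSq t b ≤ dilationEnergy t b a ∧ dilationEnergy t b a ≤ B * dtNormSq t b)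
    {m : ℕ} (hm : m ≠ 0) : A ≤ divisorWeight t a m ∧ divisorWeight t a m ≤ B := by
  obtain ⟨hlow, hup⟩ := hframe _ (summable_single_weighted_norm_sq t (m := m))
  rw [dtNormSq_single t hm, dilationEnergy_single t a hm] at hlow hup
  have hP : 0 < ((m : ℝ) + 1) ^ t := by positivity
  rw [divisorWeight]
  exact ⟨le_of_mul_le_mul_right (by linarith) hP, le_of_mul_le_mul_right (by linarith) hP⟩

lemma tendsto_norm_sq_mul_rpow_of_summable
    (hmem : Summable fun n : ℕ => ‖a (n + 1)‖ ^ 2 * ((n : ℝ) + 2) ^ t) :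
    Tendsto (fun n : ℕ => ‖a n‖ ^ 2 * ((n : ℝ) + 1) ^ t) atTop (𝓝 0) := by
  rw [← tendsto_add_atTop_iff_nat 1]
  convert hmem.tendsto_atTop_zero using 4 with n
  push_cast
  ring

lemma tendsto_natCast_add_one_rpow_of_neg (ht : t < 0) :
    Tendsto (fun n : ℕ => ((n : ℝ) + 1) ^ t) atTop (𝓝 0) := by
  simpa [Function.comp_def] using (tendsto_rpow_neg_atTop (neg_pos.2 ht)).comp
    (tendsto_atTop_add_const_right atTop 1 tendsto_natCast_atTop_atTop)

lemma exists_divisorWeight_lt_of_neg (ht : t < 0)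
    (hmem : Summable fun n : ℕ => ‖a (n + 1)‖ ^ 2 * ((n : ℝ) + 2) ^ t) {ε : ℝ} (hε : 0 < ε) :
    ∃ m ≠ 0, divisorWeight t a m < ε := by
  have hlim : Tendsto (fun n : ℕ => (‖a 1‖ ^ 2 + ‖a n‖ ^ 2) * ((n : ℝ) + 1) ^ t) atTop (𝓝 0) := by
    have := ((tendsto_natCast_add_one_rpow_of_neg t ht).const_mul (‖a 1‖ ^ 2)).add
      (tendsto_norm_sq_mul_rpow_of_summable t a hmem)
    simpa only [mul_zero, add_zero, add_mul] using this
  obtain ⟨N, hN⟩ := eventually_atTop.1 (hlim.eventually_lt_const hε)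
  obtain ⟨p, hNp, hp⟩ := Nat.exists_infinite_primes N
  refine ⟨p, hp.ne_zero, ?_⟩
  rw [divisorWeight, hp.divisors, Finset.sum_pair hp.one_lt.ne]
  exact (mul_comm _ _).trans_lt (hN p hNp)

lemma exists_lt_divisorWeight_of_pos (ht : 0 < t) {d : ℕ} (hd : d ≠ 0) (had : a d ≠ 0) (C : ℝ) :
    ∃ m ≠ 0, C < divisorWeight t a m := by
  have hlim : Tendsto (fun M : ℕ => (((d * M : ℕ) : ℝ) + 1) ^ t * ‖a d‖ ^ 2) atTop atTop := by
    refine ((tendsto_rpow_atTop ht).comp (tendsto_atTop_mono (fun M => ?_)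
      tendsto_natCast_atTop_atTop)).atTop_mul_const (by positivity)
    have : M ≤ d * M := Nat.le_mul_of_pos_left M (Nat.pos_of_ne_zero hd)
    exact_mod_cast this.trans (Nat.le_succ _)
  obtain ⟨M, hCM, hM⟩ := ((hlim.eventually_gt_atTop C).and (eventually_ne_atTop 0)).exists
  refine ⟨d * M, mul_ne_zero hd hM, hCM.trans_le ?_⟩
  have hdM : d ∈ (d * M).divisors := Nat.mem_divisors.2 ⟨dvd_mul_right d M, mul_ne_zero hd hM⟩
  exact mul_le_mul_of_nonneg_left
    (Finset.single_le_sum (f := fun d => ‖a d‖ ^ 2) (fun _ _ => by positivity) hdM) (by positivity)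

end

/-- For `t ≠ 0` and any nonzero `f = ∑_{n ≥ 1} a_n z^n ∈ D_t`, the system
`{f(z^k)}_{k ∈ ℕ}` never forms a frame for `D_t`: there are no constants `A, B > 0` with
`A‖h‖² ≤ ∑_{k ≥ 1} |⟨h, f(z^k)⟩_{D_t}|² ≤ B‖h‖²` for all `h ∈ D_t`. -/
theorem power_dilation_no_frame (t : ℝ) (ht : t ≠ 0) (a : ℕ → ℂ)
    (hmem : Summable fun n : ℕ => ‖a (n + 1)‖ ^ 2 * (((n : ℝ) + 2) ^ t))
    (hne : ∃ n : ℕ, a (n + 1) ≠ 0) :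
    ¬ ∃ A B : ℝ, 0 < A ∧ 0 < B ∧
      ∀ b : ℕ → ℂ, (Summable fun n : ℕ => ‖b (n + 1)‖ ^ 2 * (((n : ℝ) + 2) ^ t)) →
        (A * ∑' n : ℕ, ‖b (n + 1)‖ ^ 2 * (((n : ℝ) + 2) ^ t) ≤
            ∑' k : ℕ, ‖dilationPairing t b a (k + 1)‖ ^ 2) ∧
        (∑' k : ℕ, ‖dilationPairing t b a (k + 1)‖ ^ 2 ≤
            B * ∑' n : ℕ, ‖b (n + 1)‖ ^ 2 * (((n : ℝ) + 2) ^ t)) := by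
  rintro ⟨A, B, hA, -, hframe⟩
  have hbounds : ∀ m ≠ 0, A ≤ divisorWeight t a m ∧ divisorWeight t a m ≤ B :=
    fun m hm => le_divisorWeight_le_of_frame t a hframe hm
  rcases ht.lt_or_gt with hneg | hpos
  · obtain ⟨m, hm, hlt⟩ := exists_divisorWeight_lt_of_neg t a hneg hmem hA
    exact (hbounds m hm).1.not_gt hlt
  · obtain ⟨n, hn⟩ := hne
    obtain ⟨m, hm, hlt⟩ := exists_lt_divisorWeight_of_pos t a hpos n.succ_ne_zero hn B
    exact (hbounds m hm).2.not_gt hlt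
end

section
/- Suppose t < 0, f = Σ a_n z^n ∈ D_t, p is a prime, and there exist A, B > 0 such that A(p^n+1)^{−t} ≤ Σ_{i=1}^{n} |a_{p^i}|² ≤ B(p^n+1)^{−t} for all n ≥ 1. If p^t < A/(2B), then Σ_{n≥1} |a_{p^n}|² (p^n+1)^t = ∞, contradicting f ∈ D_t. Hence no such f exists. -/
/-! Subtracting the upper bound at `n` from the lower bound at `n + 1` gives
`|a_{p^{n+1}}|² (p^{n+1} + 1)^t ≥ A - B ((p^{n+1} + 1) / (p^n + 1))^t`, and the right-hand side
tends to `A - B p^t > B p^t > 0`, so the terms of the series do not tend to zero. -/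

open Filter Topology

lemma tendsto_pow_succ_add_one_div_pow_add_one {q : ℝ} (hq : 1 < q) :
    Tendsto (fun n : ℕ => (q ^ (n + 1) + 1) / (q ^ n + 1)) atTop (𝓝 q) := by
  have hinv : Tendsto (fun n : ℕ => (q ^ n + 1)⁻¹) atTop (𝓝 0) :=
    (tendsto_atTop_add_const_right _ 1 (tendsto_pow_atTop_atTop_of_one_lt hq)).inv_tendsto_atTop
  have hlim := (tendsto_const_nhds (x := q)).add ((tendsto_const_nhds (x := 1 - q)).mul hinv)
  rw [mul_zero, add_zero] at hlim
  refine hlim.congr fun n => ?_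
  have : q ^ n + 1 ≠ 0 := by positivity
  field_simp
  ring

lemma sub_mul_div_rpow_le_mul_rpow {A B c x y t : ℝ} (hx : 0 < x) (hy : 0 < y)
    (h : A * y ^ (-t) - B * x ^ (-t) ≤ c) : A - B * (y / x) ^ t ≤ c * y ^ t :=
  calc A - B * (y / x) ^ t = (A * y ^ (-t) - B * x ^ (-t)) * y ^ t := by
        rw [Real.div_rpow hy.le hx.le, Real.rpow_neg hx.le, Real.rpow_neg hy.le]
        field_simp
    _ ≤ c * y ^ t := by gcongr

theorem not_summable_of_partial_sum_bounds {b : ℕ → ℝ} {q t A B : ℝ} (hq : 1 < q)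
    (hB : 0 < B)
    (hbounds : ∀ n : ℕ, 1 ≤ n →
      A * (q ^ n + 1) ^ (-t) ≤ ∑ i ∈ Finset.Icc 1 n, b i ∧
      ∑ i ∈ Finset.Icc 1 n, b i ≤ B * (q ^ n + 1) ^ (-t))
    (hqt : q ^ t < A / (2 * B)) :
    ¬ Summable fun n : ℕ => b (n + 1) * (q ^ (n + 1) + 1) ^ t := by
  intro hsum
  have hterm : ∀ n, 1 ≤ n →
      A - B * ((q ^ (n + 1) + 1) / (q ^ n + 1)) ^ t ≤ b (n + 1) * (q ^ (n + 1) + 1) ^ t := by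
    intro n hn
    refine sub_mul_div_rpow_le_mul_rpow (by positivity) (by positivity) ?_
    have hlow := (hbounds (n + 1) (by omega)).1
    rw [Finset.sum_Icc_succ_top (by omega)] at hlow
    linarith [(hbounds n hn).2]
  have hratio := (tendsto_pow_succ_add_one_div_pow_add_one hq).rpow_const (p := t)
    (Or.inl (by positivity))
  have hlim : A - B * q ^ t ≤ 0 :=
    le_of_tendsto_of_tendsto (tendsto_const_nhds.sub (tendsto_const_nhds.mul hratio))
      hsum.tendsto_atTop_zero (eventually_atTop.2 ⟨1, hterm⟩)
  have hBqt : 0 < B * q ^ t := mul_pos hB (Real.rpow_pos_of_pos (by positivity) t)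
  rw [lt_div_iff₀ (by positivity)] at hqt
  linarith

theorem frame_bounds_contradiction_general (t : ℝ) (a : ℕ → ℂ) (p : ℕ) (hp : p.Prime)
    (A B : ℝ) (hB : 0 < B)
    (hbounds : ∀ n : ℕ, 1 ≤ n →
      A * (((p ^ n : ℝ) + 1) ^ (-t)) ≤ ∑ i ∈ Finset.Icc 1 n, ‖a (p ^ i)‖ ^ 2 ∧
      ∑ i ∈ Finset.Icc 1 n, ‖a (p ^ i)‖ ^ 2 ≤ B * (((p ^ n : ℝ) + 1) ^ (-t)))
    (hpt : (p : ℝ) ^ t < A / (2 * B)) :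
    ¬ Summable (fun n : ℕ => ‖a (p ^ (n + 1))‖ ^ 2 * (((p ^ (n + 1) : ℝ) + 1) ^ t)) :=
  not_summable_of_partial_sum_bounds (b := fun i => ‖a (p ^ i)‖ ^ 2) (by exact_mod_cast hp.one_lt)
    hB hbounds hpt

/-- Suppose `t < 0`, `f = ∑ a_n z^n ∈ D_t`, `p` is prime, and there exist
`A, B > 0` such that `A (p^n + 1)^{-t} ≤ ∑_{i=1}^{n} |a_{p^i}|² ≤ B (p^n + 1)^{-t}` for all
`n ≥ 1`.  If `p^t < A/(2B)`, then `∑_{n ≥ 1} |a_{p^n}|² (p^n + 1)^t = ∞` (the series is not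
summable), contradicting `f ∈ D_t`.  Hence no such `f` exists. -/
theorem frame_bounds_contradiction (t : ℝ) (ht : t < 0) (a : ℕ → ℂ) (p : ℕ) (hp : p.Prime)
    (A B : ℝ) (hA : 0 < A) (hB : 0 < B)
    (hbounds : ∀ n : ℕ, 1 ≤ n →
      A * (((p ^ n : ℝ) + 1) ^ (-t)) ≤ ∑ i ∈ Finset.Icc 1 n, ‖a (p ^ i)‖ ^ 2 ∧
      ∑ i ∈ Finset.Icc 1 n, ‖a (p ^ i)‖ ^ 2 ≤ B * (((p ^ n : ℝ) + 1) ^ (-t)))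
    (hpt : (p : ℝ) ^ t < A / (2 * B)) :
    ¬ Summable (fun n : ℕ => ‖a (p ^ (n + 1))‖ ^ 2 * (((p ^ (n + 1) : ℝ) + 1) ^ t)) :=
  frame_bounds_contradiction_general t a p hp A B hB hbounds hpt
end

section
/- A frame {x_k}_{k∈ℕ} for a separable Hilbert space H is a Riesz basis if and only if it is ω-independent (i.e., Σ c_k x_k = 0 in norm implies all c_k = 0). -/
open Filter

variable {H : Type*} [NormedAddCommGroup H] [InnerProductSpace ℂ H] [CompleteSpace H]

/-- `{x_k}` is a frame for `H`: there are `A, B > 0` with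
`A‖v‖² ≤ ∑_k |⟨v, x_k⟩|² ≤ B‖v‖²` for all `v ∈ H`. -/
def IsFrame (x : ℕ → H) : Prop :=
  ∃ A B : ℝ, 0 < A ∧ 0 < B ∧ ∀ v : H,
    A * ‖v‖ ^ 2 ≤ ∑' k : ℕ, ‖(inner ℂ v (x k) : ℂ)‖ ^ 2 ∧
    ∑' k : ℕ, ‖(inner ℂ v (x k) : ℂ)‖ ^ 2 ≤ B * ‖v‖ ^ 2

/-- `{x_k}` is a Riesz basis for `H`: the image of an orthonormal basis under a bounded
invertible operator. -/
def IsRieszBasis (x : ℕ → H) : Prop :=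
  ∃ (e : HilbertBasis ℕ ℂ H) (T : H ≃L[ℂ] H), ∀ k, x k = T (e k)

/-- `{x_k}` is ω-independent: if `∑ c_k x_k` converges to `0` in norm then all `c_k = 0`. -/
def IsOmegaIndependent (x : ℕ → H) : Prop :=
  ∀ c : ℕ → ℂ,
    Tendsto (fun N : ℕ => ∑ k ∈ Finset.range N, c k • x k) atTop (nhds 0) →
    ∀ k, c k = 0

/-!
The analysis operator `Θ v = (⟪x k, v⟫)ₖ` of a frame maps `H` into `ℓ²` and is bounded below by
the lower frame bound, so `Θ†Θ` is coercive and the synthesis operator `Θ† c = ∑ c k • x k` maps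
`ℓ²` onto `H`. Its injectivity is exactly ω-independence, so `Θ†` is an isomorphism `ℓ² ≃ H`
sending the standard basis to `(x k)`; composing it with the coordinate isomorphism of an
orthonormal basis of `H` (obtained by Gram–Schmidt) exhibits a Riesz basis. Conversely, if
`x k = T (e k)` then the functionals `⟪e k, T⁻¹ ·⟫` are biorthogonal to `(x k)`, and pairing them
with the partial sums of a null series shows that all its coefficients vanish.
-/

open scoped lp InnerProductSpace InnerProduct

theorem lp.norm_sq_eq_tsum {ι 𝕜 : Type*} [RCLike 𝕜] (f : ℓ²(ι, 𝕜)) :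
    ‖f‖ ^ 2 = ∑' i, ‖f i‖ ^ 2 := by
  simpa using lp.norm_rpow_eq_tsum (p := 2) (by norm_num) f

theorem ContinuousLinearMap.adjoint_surjective_of_le_norm_sq {𝕜 E F : Type*} [RCLike 𝕜]
    [NormedAddCommGroup E] [InnerProductSpace 𝕜 E] [CompleteSpace E]
    [NormedAddCommGroup F] [InnerProductSpace 𝕜 F] [CompleteSpace F]
    (T : E →L[𝕜] F) {c : NNReal} (hc : 0 < c) (h : ∀ v, ‖v‖ ^ 2 * c ≤ ‖T v‖ ^ 2) :
    Function.Surjective (T†) := by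
  have hTT : ∀ v, ‖⟪(T† ∘L T) v, v⟫_𝕜‖ = ‖T v‖ ^ 2 := fun v => by
    rw [comp_apply, adjoint_inner_left, inner_self_eq_norm_sq_to_K, ← RCLike.ofReal_pow,
      RCLike.norm_ofReal, abs_sq]
  have hunit := isUnit_of_forall_le_norm_inner_map _ hc fun v => (h v).trans (hTT v).ge
  exact Function.Surjective.of_comp (isUnit_iff_bijective.1 hunit).2

theorem nonempty_hilbertBasis_of_continuousLinearEquiv {𝕜 E : Type*} [RCLike 𝕜]
    [NormedAddCommGroup E] [InnerProductSpace 𝕜 E] [CompleteSpace E] (V : ℓ²(ℕ, 𝕜) ≃L[𝕜] E) :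
    Nonempty (HilbertBasis ℕ 𝕜 E) := by
  let b : HilbertBasis ℕ 𝕜 ℓ²(ℕ, 𝕜) := HilbertBasis.ofRepr (LinearIsometryEquiv.refl 𝕜 _)
  have hli : LinearIndependent 𝕜 (V ∘ b) :=
    b.orthonormal.linearIndependent.map' (V : ℓ²(ℕ, 𝕜) →ₗ[𝕜] E) (LinearEquiv.ker V.toLinearEquiv)
  have hdense : (Submodule.span 𝕜 (Set.range (V ∘ b))).topologicalClosure = ⊤ := by
    have := V.surjective.denseRange.topologicalClosure_map_submodule
      (f := (V : ℓ²(ℕ, 𝕜) →L[𝕜] E)) b.dense_span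
    rwa [Submodule.map_span, ← Set.range_comp] at this
  refine ⟨HilbertBasis.mk (InnerProductSpace.gramSchmidtNormed_orthonormal hli) ?_⟩
  rw [InnerProductSpace.span_gramSchmidtNormed_range, InnerProductSpace.span_gramSchmidt, hdense]

section

variable {E : Type*} [NormedAddCommGroup E] [InnerProductSpace ℂ E]

theorem isOmegaIndependent_of_biorthogonal {x : ℕ → E}
    (h : ∀ k, ∃ φ : E →L[ℂ] ℂ, ∀ j, φ (x j) = if j = k then 1 else 0) :
    IsOmegaIndependent x := by
  intro c hc k
  obtain ⟨φ, hφ⟩ := h k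
  have hlim := ((φ.continuous.tendsto 0).comp hc).congr' (f₂ := fun _ => c k) <| by
    filter_upwards [eventually_gt_atTop k] with N hN
    simp [map_sum, hφ, hN]
  simpa using tendsto_nhds_unique tendsto_const_nhds hlim

theorem IsRieszBasis.isOmegaIndependent {x : ℕ → E} (hx : IsRieszBasis x) :
    IsOmegaIndependent x := by
  obtain ⟨e, T, hT⟩ := hx
  refine isOmegaIndependent_of_biorthogonal fun k => ⟨innerSL ℂ (e k) ∘L T.symm, fun j => ?_⟩
  simp [hT, orthonormal_iff_ite.1 e.orthonormal, eq_comm]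

theorem isRieszBasis_of_continuousLinearEquiv [CompleteSpace E] {x : ℕ → E}
    (V : ℓ²(ℕ, ℂ) ≃L[ℂ] E) (hV : ∀ k, V (lp.single 2 k 1) = x k) : IsRieszBasis x := by
  obtain ⟨e⟩ := nonempty_hilbertBasis_of_continuousLinearEquiv V
  refine ⟨e, e.repr.toContinuousLinearEquiv.trans V, fun k => ?_⟩
  simp [HilbertBasis.repr_self, hV]

namespace IsFrame

variable {x : ℕ → E} (hx : IsFrame x)
include hx

theorem summable_norm_inner_sq (v : E) : Summable fun k => ‖⟪x k, v⟫_ℂ‖ ^ 2 := by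
  obtain ⟨A, B, hA, -, hfr⟩ := hx
  simp_rw [norm_inner_symm (x _)]
  by_contra hns
  -- the `tsum` of a non-summable series is `0`, which the lower frame bound allows only at `0`
  have hv : A * ‖v‖ ^ 2 ≤ 0 := tsum_eq_zero_of_not_summable hns ▸ (hfr v).1
  have hv0 : v = 0 := by simpa using nonpos_of_mul_nonpos_right hv hA
  exact hns (by simp [hv0])

theorem memℓp_inner (v : E) : Memℓp (fun k => ⟪x k, v⟫_ℂ) 2 :=
  memℓp_gen (by simpa using hx.summable_norm_inner_sq v)

noncomputable def analysisₗ : E →ₗ[ℂ] ℓ²(ℕ, ℂ) where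
  toFun v := ⟨fun k => ⟪x k, v⟫_ℂ, hx.memℓp_inner v⟩
  map_add' _ _ := lp.ext <| funext fun _ => inner_add_right _ _ _
  map_smul' _ _ := lp.ext <| funext fun _ => inner_smul_right _ _ _

theorem norm_analysisₗ_sq (v : E) :
    ‖hx.analysisₗ v‖ ^ 2 = ∑' k, ‖⟪v, x k⟫_ℂ‖ ^ 2 := by
  simp_rw [lp.norm_sq_eq_tsum, norm_inner_symm v]
  rfl

noncomputable def analysis : E →L[ℂ] ℓ²(ℕ, ℂ) :=
  hx.analysisₗ.mkContinuousOfExistsBound <| by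
    have ⟨A, B, _, hB, hfr⟩ := hx
    refine ⟨√B, fun v => ?_⟩
    rw [← Real.sqrt_sq (norm_nonneg v), ← Real.sqrt_mul hB.le]
    exact Real.le_sqrt_of_sq_le (hx.norm_analysisₗ_sq v ▸ (hfr v).2)

theorem analysis_apply (v : E) (k : ℕ) : hx.analysis v k = ⟪x k, v⟫_ℂ := rfl

variable [CompleteSpace E]

theorem adjoint_analysis_single (k : ℕ) (a : ℂ) :
    (hx.analysis†) (lp.single 2 k a) = a • x k := by
  refine ext_inner_right ℂ fun w => ?_
  rw [ContinuousLinearMap.adjoint_inner_left, lp.inner_single_left, inner_smul_left,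
    analysis_apply, RCLike.inner_apply']

theorem hasSum_adjoint_analysis (c : ℓ²(ℕ, ℂ)) :
    HasSum (fun k => c k • x k) ((hx.analysis†) c) := by
  simpa only [hx.adjoint_analysis_single] using
    (lp.hasSum_single ENNReal.ofNat_ne_top c).mapL (hx.analysis†)

theorem adjoint_analysis_surjective : Function.Surjective (hx.analysis†) := by
  have ⟨A, B, hA, _, hfr⟩ := hx
  refine hx.analysis.adjoint_surjective_of_le_norm_sq (c := ⟨A, hA.le⟩) hA fun v => ?_
  exact mul_comm A _ ▸ hx.norm_analysisₗ_sq v ▸ (hfr v).1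

theorem adjoint_analysis_injective (hω : IsOmegaIndependent x) :
    Function.Injective (hx.analysis†) := by
  refine (injective_iff_map_eq_zero _).2 fun c hc => lp.ext <| funext <| hω c ?_
  simpa [hc] using (hx.hasSum_adjoint_analysis c).tendsto_sum_nat

end IsFrame

end

theorem frame_riesz_iff_omega_independent_general
    (x : ℕ → H) (hx : IsFrame x) :
    IsRieszBasis x ↔ IsOmegaIndependent x := by
  refine ⟨IsRieszBasis.isOmegaIndependent, fun hω => ?_⟩
  let V : ℓ²(ℕ, ℂ) ≃L[ℂ] H := .ofBijective (hx.analysis†)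
    (LinearMap.ker_eq_bot.2 (hx.adjoint_analysis_injective hω))
    (LinearMap.range_eq_top.2 hx.adjoint_analysis_surjective)
  exact isRieszBasis_of_continuousLinearEquiv V fun k =>
    (hx.adjoint_analysis_single k 1).trans (one_smul ℂ (x k))

/-- A frame `{x_k}` for a separable Hilbert space `H` is a Riesz basis if
and only if it is ω-independent. -/
theorem frame_riesz_iff_omega_independent [TopologicalSpace.SeparableSpace H]
    (x : ℕ → H) (hx : IsFrame x) :
    IsRieszBasis x ↔ IsOmegaIndependent x :=
  frame_riesz_iff_omega_independent_general x hx
end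

section
/- For f ∈ D_t, the system {f(z^k)}_{k∈ℕ} is complete in D_t (spans a dense subspace) if and only if {(S_t f)(z^k)}_{k∈ℕ} is complete in the Hardy space H_0²(𝔻). In particular, the completeness problems for power dilation systems in all Dirichlet-type spaces D_t are equivalent. -/
/-!
Let `M` multiply the `n`-th coefficient by `(n+1)^t`, so that `⟨h, g⟩_{D_t} = ⟨M h, g⟩_{H²}`, and
put `c = S_t⁻¹ M h`, i.e. `c_n = h_n (n+1)^t / n^{t/2}`. Since `S_t` is a real diagonal operator,
`S_t C_k = k^{t/2} C_k S_t` gives `⟨h, f(z^k)⟩_{D_t} = k^{t/2} ⟨c, (S_t f)(z^k)⟩_{H²}`. The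
correspondence `h ↦ c` is a bijection `D_t → H₀²` (the ratio of the weights `(n+1)^{2t}/n^t` and
`(n+1)^t` stays between `2^{-|t|}` and `2^{|t|}`), so the orthogonal complements of the two
systems correspond, and one is trivial iff the other is.
-/

open ComplexConjugate

lemma summable_mul_iff_of_mem_Icc {f r : ℕ → ℝ} {C : ℝ} (hf : ∀ n, 0 ≤ f n) (hC : 0 < C)
    (hr : ∀ n, r n ∈ Set.Icc C⁻¹ C) : Summable (fun n => f n * r n) ↔ Summable f := by
  constructor
  · intro h
    refine Summable.of_nonneg_of_le hf (fun n => ?_) (h.mul_left C)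
    have hCr : 1 ≤ C * r n := (inv_le_iff_one_le_mul₀' hC).1 (hr n).1
    nlinarith [hf n]
  · intro h
    exact Summable.of_nonneg_of_le (fun n => mul_nonneg (hf n) ((inv_pos.2 hC).le.trans (hr n).1))
      (fun n => mul_le_mul_of_nonneg_left (hr n).2 (hf n)) (h.mul_right C)

lemma rpow_mem_Icc_of_one_le_of_le_two {x : ℝ} (t : ℝ) (h1 : 1 ≤ x) (h2 : x ≤ 2) :
    x ^ t ∈ Set.Icc (2 ^ |t|)⁻¹ (2 ^ |t|) := by
  have hx : 0 < x := zero_lt_one.trans_le h1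
  constructor
  · calc (2 ^ |t|)⁻¹ = (2 : ℝ) ^ (-|t|) := (Real.rpow_neg zero_le_two _).symm
      _ ≤ x ^ (-|t|) := Real.rpow_le_rpow_of_nonpos hx h2 (neg_nonpos.2 (abs_nonneg t))
      _ ≤ x ^ t := Real.rpow_le_rpow_of_exponent_le h1 (neg_abs_le t)
  · calc x ^ t ≤ x ^ |t| := Real.rpow_le_rpow_of_exponent_le h1 (le_abs_self t)
      _ ≤ 2 ^ |t| := Real.rpow_le_rpow hx.le h2 (abs_nonneg t)

noncomputable def transferWeight (t : ℝ) (m : ℕ) : ℝ := ((m : ℝ) + 1) ^ t / (m : ℝ) ^ (t / 2)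

lemma transferWeight_pos (t : ℝ) {m : ℕ} (hm : 0 < m) : 0 < transferWeight t m := by
  have : (0 : ℝ) < m := Nat.cast_pos.2 hm
  unfold transferWeight
  positivity

lemma sq_transferWeight_succ (t : ℝ) (n : ℕ) :
    transferWeight t (n + 1) ^ 2 = ((n : ℝ) + 2) ^ t * (((n : ℝ) + 2) / ((n : ℝ) + 1)) ^ t := by
  have hsq : (((n : ℝ) + 1) ^ (t / 2)) ^ 2 = ((n : ℝ) + 1) ^ t := by
    rw [← Real.rpow_natCast, ← Real.rpow_mul (by positivity)]
    norm_num
  unfold transferWeight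
  rw [div_pow, Real.div_rpow (by positivity) (by positivity)]
  push_cast
  rw [hsq, show (n : ℝ) + 1 + 1 = n + 2 by ring]
  ring

section Correspondence

variable {t : ℝ} {b c : ℕ → ℂ}

lemma summable_hardy_iff_summable_dirichlet (hbc : ∀ m, 0 < m → c m = b m * transferWeight t m) :
    Summable (fun n : ℕ => ‖c (n + 1)‖ ^ 2) ↔
      Summable (fun n : ℕ => ‖b (n + 1)‖ ^ 2 * ((n : ℝ) + 2) ^ t) := by
  have hnorm : (fun n : ℕ => ‖c (n + 1)‖ ^ 2) = fun n : ℕ =>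
      ‖b (n + 1)‖ ^ 2 * ((n : ℝ) + 2) ^ t * (((n : ℝ) + 2) / ((n : ℝ) + 1)) ^ t := by
    funext n
    rw [hbc _ n.succ_pos, norm_mul, Complex.norm_real, mul_pow, Real.norm_eq_abs, sq_abs,
      sq_transferWeight_succ]
    ring
  rw [hnorm]
  refine summable_mul_iff_of_mem_Icc (fun n => by positivity) (by positivity) fun n =>
    rpow_mem_Icc_of_one_le_of_le_two t ?_ ?_
  · rw [one_le_div (by positivity)]
    linarith
  · rw [div_le_iff₀ (by positivity)]
    linarith

lemma hardy_pairing_term_eq (a : ℕ → ℂ) (hbc : ∀ m, 0 < m → c m = b m * transferWeight t m) {k : ℕ}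
    (hk : 0 < k) (n : ℕ) :
    c ((n + 1) * k) * conj (((((n : ℝ) + 1) ^ (t / 2) : ℝ) : ℂ) * a (n + 1)) =
      (((k : ℝ) ^ (t / 2))⁻¹ : ℝ) *
        (b ((n + 1) * k) * conj (a (n + 1)) * (((((n : ℝ) + 1) * k + 1) ^ t : ℝ) : ℂ)) := by
  have hkR : (0 : ℝ) < k := Nat.cast_pos.2 hk
  have hA : (0 : ℝ) < ((n : ℝ) + 1) ^ (t / 2) := by positivity
  have hK : (0 : ℝ) < (k : ℝ) ^ (t / 2) := by positivity
  have hweight : transferWeight t ((n + 1) * k) =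
      (((n : ℝ) + 1) * k + 1) ^ t / (((n : ℝ) + 1) ^ (t / 2) * (k : ℝ) ^ (t / 2)) := by
    rw [transferWeight, ← Real.mul_rpow (by positivity) hkR.le]
    push_cast
    rfl
  rw [hbc _ (Nat.mul_pos n.succ_pos hk), hweight, map_mul, Complex.conj_ofReal]
  have hA' : ((((n : ℝ) + 1) ^ (t / 2) : ℝ) : ℂ) ≠ 0 := Complex.ofReal_ne_zero.2 hA.ne'
  have hK' : (((k : ℝ) ^ (t / 2) : ℝ) : ℂ) ≠ 0 := Complex.ofReal_ne_zero.2 hK.ne'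
  push_cast
  field_simp

lemma tsum_hardy_pairing_eq_zero_iff (a : ℕ → ℂ) (hbc : ∀ m, 0 < m → c m = b m * transferWeight t m)
    {k : ℕ} (hk : 0 < k) :
    ∑' n : ℕ, c ((n + 1) * k) * conj (((((n : ℝ) + 1) ^ (t / 2) : ℝ) : ℂ) * a (n + 1)) = 0 ↔
      ∑' n : ℕ, b ((n + 1) * k) * conj (a (n + 1)) *
        (((((n : ℝ) + 1) * k + 1) ^ t : ℝ) : ℂ) = 0 := by
  have hK : (((k : ℝ) ^ (t / 2))⁻¹ : ℝ) ≠ 0 :=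
    inv_ne_zero (Real.rpow_pos_of_pos (Nat.cast_pos.2 hk) _).ne'
  rw [tsum_congr (hardy_pairing_term_eq a hbc hk), tsum_mul_left, mul_eq_zero,
    or_iff_right (Complex.ofReal_ne_zero.2 hK)]

end Correspondence

theorem completeness_transfer_general (t : ℝ) (a : ℕ → ℂ) :
    ((∀ b : ℕ → ℂ, (Summable fun n : ℕ => ‖b (n + 1)‖ ^ 2 * (((n : ℝ) + 2) ^ t)) →
        (∀ k : ℕ, 0 < k →
          ∑' n : ℕ, b ((n + 1) * k) * (starRingEnd ℂ) (a (n + 1)) *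
            (((((n : ℝ) + 1) * k + 1) ^ t : ℝ) : ℂ) = 0) →
        ∀ n : ℕ, b (n + 1) = 0) ↔
      (∀ b : ℕ → ℂ, (Summable fun n : ℕ => ‖b (n + 1)‖ ^ 2) →
        (∀ k : ℕ, 0 < k →
          ∑' n : ℕ, b ((n + 1) * k) *
            (starRingEnd ℂ) ((((((n : ℝ) + 1) ^ (t / 2)) : ℝ) : ℂ) * a (n + 1)) = 0) →
        ∀ n : ℕ, b (n + 1) = 0)) := by
  have hweight_ne {m : ℕ} (hm : 0 < m) : (transferWeight t m : ℂ) ≠ 0 :=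
    Complex.ofReal_ne_zero.2 (transferWeight_pos t hm).ne'
  constructor
  · intro hD c hc hc_orth n
    set b : ℕ → ℂ := fun m => c m / transferWeight t m
    have hbc : ∀ m, 0 < m → c m = b m * transferWeight t m :=
      fun m hm => (div_mul_cancel₀ _ (hweight_ne hm)).symm
    have hb_zero := hD b ((summable_hardy_iff_summable_dirichlet hbc).1 hc)
      (fun k hk => (tsum_hardy_pairing_eq_zero_iff a hbc hk).1 (hc_orth k hk)) n
    rw [hbc _ n.succ_pos, hb_zero, zero_mul]
  · intro hH b hb hb_orth n
    set c : ℕ → ℂ := fun m => b m * transferWeight t m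
    have hbc : ∀ m, 0 < m → c m = b m * transferWeight t m := fun _ _ => rfl
    have hc_zero := hH c ((summable_hardy_iff_summable_dirichlet hbc).2 hb)
      (fun k hk => (tsum_hardy_pairing_eq_zero_iff a hbc hk).2 (hb_orth k hk)) n
    exact (mul_eq_zero.1 hc_zero).resolve_right (hweight_ne n.succ_pos)

/-- For `f = ∑_{n ≥ 1} a_n z^n ∈ D_t`, the system `{f(z^k)}_{k ∈ ℕ}` is
complete in `D_t` (spans a dense subspace; equivalently, has trivial orthogonal complement)
if and only if `{(S_t f)(z^k)}_{k ∈ ℕ}` is complete in the Hardy space `H₀²(𝔻)`, where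
`S_t f = ∑ a_n n^{t/2} z^n`.  Here completeness is expressed via the vanishing of the
orthogonal complement: an element `h = ∑_{n ≥ 1} b_n z^n` orthogonal to every `f(z^k)`
(i.e. `∑_{n ≥ 1} b_{nk} conj(a_n) (nk+1)^t = 0` for all `k ≥ 1`) must be zero.  In
particular, the completeness problems for power dilation systems in all Dirichlet-type
spaces `D_t` are equivalent. -/
theorem completeness_transfer (t : ℝ) (a : ℕ → ℂ)
    (hmem : Summable fun n : ℕ => ‖a (n + 1)‖ ^ 2 * (((n : ℝ) + 2) ^ t)) :
    ((∀ b : ℕ → ℂ, (Summable fun n : ℕ => ‖b (n + 1)‖ ^ 2 * (((n : ℝ) + 2) ^ t)) →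
        (∀ k : ℕ, 0 < k →
          ∑' n : ℕ, b ((n + 1) * k) * (starRingEnd ℂ) (a (n + 1)) *
            (((((n : ℝ) + 1) * k + 1) ^ t : ℝ) : ℂ) = 0) →
        ∀ n : ℕ, b (n + 1) = 0) ↔
      (∀ b : ℕ → ℂ, (Summable fun n : ℕ => ‖b (n + 1)‖ ^ 2) →
        (∀ k : ℕ, 0 < k →
          ∑' n : ℕ, b ((n + 1) * k) *
            (starRingEnd ℂ) ((((((n : ℝ) + 1) ^ (t / 2)) : ℝ) : ℂ) * a (n + 1)) = 0) →
        ∀ n : ℕ, b (n + 1) = 0)) :=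
  completeness_transfer_general t a
end

section
/- Let f(z) = Σ_{n≥1} a_n z^n ∈ D_t with ‖f‖_{D_t} = 1, t ≠ 0, and suppose {f(z^k)}_{k∈ℕ} is orthogonal in D_t. Then both identities hold for every pair of coprime positive integers i, j with ij > 1: Σ_{n≥1} conj(a_{ni}) a_{nj} (nij)^t = 0 and Σ_{n≥1} conj(a_{ni}) a_{nj} (nij)^{t−1} = 0. -/
/-!
Write `cₙ = conj(a_{(n+1)i}) a_{(n+1)j}` and `mₙ = (n+1)ij ≥ 1`. Dividing the orthogonality
relation for `k` by `k^t` gives `∑ cₙ (mₙ + 1/k)^t = 0`; dominated convergence as `k → ∞` yields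
`∑ cₙ mₙ^t = 0`. Subtracting this and multiplying by `k`, the difference quotients
`k ((mₙ + 1/k)^t - mₙ^t)` tend to `t mₙ^(t-1)` and are dominated, by the mean value theorem, by a
multiple of `|cₙ| mₙ^t`, so `t ∑ cₙ mₙ^(t-1) = 0`. The domination `∑ |cₙ| mₙ^t < ∞` comes from the
`D_t` norm of `f` by Cauchy–Schwarz.
-/

open Filter Topology Real

lemma rpow_le_rpow_abs_mul_rpow (t : ℝ) {x y c : ℝ} (hx : 0 < x) (hy : 0 < y)
    (hxy : x ≤ c * y) (hyx : y ≤ c * x) : x ^ t ≤ c ^ |t| * y ^ t := by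
  have hc : 0 < c := pos_of_mul_pos_left (hx.trans_le hxy) hy.le
  rcases le_or_gt 0 t with ht | ht
  · rw [abs_of_nonneg ht, ← mul_rpow hc.le hy.le]
    exact rpow_le_rpow hx.le hxy ht
  · have hyc : y / c ≤ x := by rwa [div_le_iff₀ hc, mul_comm]
    calc x ^ t ≤ (y / c) ^ t := rpow_le_rpow_of_nonpos (by positivity) hyc ht.le
      _ = c ^ |t| * y ^ t := by
        rw [div_rpow hy.le hc.le, abs_of_neg ht, rpow_neg hc.le, div_eq_inv_mul]

lemma abs_rpow_add_sub_rpow_le (t : ℝ) {x h : ℝ} (hx : 0 < x) (h0 : 0 ≤ h) (hhx : h ≤ x) :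
    |(x + h) ^ t - x ^ t| ≤ |t| * 2 ^ |t - 1| * x ^ (t - 1) * h := by
  have hderiv : ∀ y ∈ Set.Icc x (x + h),
      HasDerivWithinAt (· ^ t) (t * y ^ (t - 1)) (Set.Icc x (x + h)) y :=
    fun y hy => (hasDerivAt_rpow_const (Or.inl (hx.trans_le hy.1).ne')).hasDerivWithinAt
  have hbound : ∀ y ∈ Set.Icc x (x + h), ‖t * y ^ (t - 1)‖ ≤ |t| * 2 ^ |t - 1| * x ^ (t - 1) := by
    intro y ⟨hxy, hyx⟩
    rw [norm_mul, norm_of_nonneg (rpow_nonneg (hx.le.trans hxy) _), mul_assoc, norm_eq_abs]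
    gcongr
    exact rpow_le_rpow_abs_mul_rpow _ (hx.trans_le hxy) hx (by linarith) (by linarith)
  simpa [abs_of_nonneg h0] using (convex_Icc x (x + h)).norm_image_sub_le_of_norm_hasDerivWithin_le
    hderiv hbound (Set.left_mem_Icc.2 (by linarith)) (Set.right_mem_Icc.2 (by linarith))

section ShiftedSums

variable {ι : Type*} {c : ι → ℂ} {m : ι → ℝ} {t : ℝ}

lemma norm_mul_rpow_add_le_s19 (hm : ∀ n, 1 ≤ m n) {h : ℝ} (h0 : 0 ≤ h) (h1 : h ≤ 1) (n : ι) :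
    ‖c n * ((m n + h) ^ t : ℝ)‖ ≤ 2 ^ |t| * (‖c n‖ * m n ^ t) := by
  have hmn := hm n
  rw [norm_mul, Complex.norm_real, norm_of_nonneg (rpow_nonneg (by linarith) _)]
  calc ‖c n‖ * (m n + h) ^ t ≤ ‖c n‖ * (2 ^ |t| * m n ^ t) := by
        gcongr
        exact rpow_le_rpow_abs_mul_rpow _ (by linarith) (by linarith) (by linarith) (by linarith)
    _ = 2 ^ |t| * (‖c n‖ * m n ^ t) := by ring

lemma summable_mul_rpow_add_s19 (hm : ∀ n, 1 ≤ m n) (hs : Summable fun n => ‖c n‖ * m n ^ t)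
    {h : ℝ} (h0 : 0 ≤ h) (h1 : h ≤ 1) : Summable fun n => c n * ((m n + h) ^ t : ℝ) :=
  (hs.mul_left _).of_norm_bounded (norm_mul_rpow_add_le_s19 hm h0 h1)

lemma tendsto_tsum_mul_rpow_add_inv (hm : ∀ n, 1 ≤ m n)
    (hs : Summable fun n => ‖c n‖ * m n ^ t) :
    Tendsto (fun k : ℕ => ∑' n, c n * ((m n + (k : ℝ)⁻¹) ^ t : ℝ)) atTop
      (𝓝 (∑' n, c n * (m n ^ t : ℝ))) := by
  refine tendsto_tsum_of_dominated_convergence (hs.mul_left (2 ^ |t|)) (fun n => ?_)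
    (.of_forall fun k =>
      norm_mul_rpow_add_le_s19 hm (inv_nonneg.2 k.cast_nonneg) (Nat.cast_inv_le_one (α := ℝ) k))
  have hshift : Tendsto (fun k : ℕ => m n + (k : ℝ)⁻¹) atTop (𝓝 (m n)) := by
    simpa using tendsto_const_nhds.add (tendsto_inv_atTop_nhds_zero_nat (𝕜 := ℝ))
  have hpos : m n ≠ 0 := by linarith [hm n]
  exact ((Complex.continuous_ofReal.tendsto _).comp (hshift.rpow_const (.inl hpos))).const_mul _

lemma tendsto_tsum_mul_slope_rpow (hm : ∀ n, 1 ≤ m n)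
    (hs : Summable fun n => ‖c n‖ * m n ^ t) :
    Tendsto (fun k : ℕ => ∑' n, c n * ((k : ℝ) * ((m n + (k : ℝ)⁻¹) ^ t - m n ^ t) : ℝ)) atTop
      (𝓝 (∑' n, c n * (t * m n ^ (t - 1) : ℝ))) := by
  refine tendsto_tsum_of_dominated_convergence
    (bound := fun n => |t| * 2 ^ |t - 1| * (‖c n‖ * m n ^ t)) (hs.mul_left _) (fun n => ?_) ?_
  · have hderiv := hasDerivAt_rpow_const (x := m n) (p := t) (.inl (by linarith [hm n]))
    have hinv : Tendsto (fun k : ℕ => (k : ℝ)⁻¹) atTop (𝓝[>] 0) :=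
      tendsto_inv_atTop_nhdsGT_zero.comp tendsto_natCast_atTop_atTop
    refine ((Complex.continuous_ofReal.tendsto _).comp
      (hderiv.tendsto_slope_zero_right.comp hinv)).const_mul _ |>.congr fun k => ?_
    simp [inv_inv, smul_eq_mul]
  · filter_upwards [eventually_ne_atTop 0] with k hk n
    have hmn := hm n
    have hk0 : (0 : ℝ) < k := by positivity
    have hdiff := abs_rpow_add_sub_rpow_le t (by linarith) (inv_nonneg.2 hk0.le)
      ((Nat.cast_inv_le_one k).trans hmn)
    have hscaled : (k : ℝ) * |(m n + (k : ℝ)⁻¹) ^ t - m n ^ t| ≤ |t| * 2 ^ |t - 1| * m n ^ t :=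
      calc (k : ℝ) * |(m n + (k : ℝ)⁻¹) ^ t - m n ^ t|
          ≤ k * (|t| * 2 ^ |t - 1| * m n ^ (t - 1) * (k : ℝ)⁻¹) := by gcongr
        _ = |t| * 2 ^ |t - 1| * m n ^ (t - 1) := by field_simp
        _ ≤ |t| * 2 ^ |t - 1| * m n ^ t := by
          have := rpow_le_rpow_of_exponent_le hmn (show t - 1 ≤ t by linarith)
          gcongr
    rw [norm_mul, Complex.norm_real, norm_eq_abs, abs_mul, abs_of_pos hk0]
    exact (mul_le_mul_of_nonneg_left hscaled (norm_nonneg _)).trans_eq (by ring)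

lemma tsum_mul_rpow_add_inv_eq_zero (hm : ∀ n, 0 ≤ m n) {k : ℕ} (hk : 0 < k)
    (h : ∑' n, c n * ((m n * k + 1) ^ t : ℝ) = 0) :
    ∑' n, c n * ((m n + (k : ℝ)⁻¹) ^ t : ℝ) = 0 := by
  have hk0 : (0 : ℝ) < k := by exact_mod_cast hk
  have hfactor : ∀ n, (m n * k + 1) ^ t = (k : ℝ) ^ t * (m n + (k : ℝ)⁻¹) ^ t := fun n => by
    rw [← mul_rpow hk0.le (by have := hm n; positivity)]
    field_simp
  simp_rw [hfactor, Complex.ofReal_mul, mul_left_comm (c _), tsum_mul_left] at h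
  exact (mul_eq_zero.1 h).resolve_left (by exact_mod_cast (rpow_pos_of_pos hk0 t).ne')

lemma tsum_mul_rpow_eq_zero (hm : ∀ n, 1 ≤ m n) (hs : Summable fun n => ‖c n‖ * m n ^ t)
    (hzero : ∀ k : ℕ, 0 < k → ∑' n, c n * ((m n + (k : ℝ)⁻¹) ^ t : ℝ) = 0) :
    ∑' n, c n * (m n ^ t : ℝ) = 0 :=
  tendsto_nhds_unique (tendsto_tsum_mul_rpow_add_inv hm hs)
    (tendsto_const_nhds.congr' (eventually_atTop.2 ⟨1, fun k hk => (hzero k hk).symm⟩))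

lemma tsum_mul_rpow_sub_one_eq_zero (ht : t ≠ 0) (hm : ∀ n, 1 ≤ m n)
    (hs : Summable fun n => ‖c n‖ * m n ^ t)
    (hzero : ∀ k : ℕ, 0 < k → ∑' n, c n * ((m n + (k : ℝ)⁻¹) ^ t : ℝ) = 0) :
    ∑' n, c n * (m n ^ (t - 1) : ℝ) = 0 := by
  have hlimit := tsum_mul_rpow_eq_zero hm hs hzero
  have hslope : ∀ k : ℕ, 0 < k →
      ∑' n, c n * ((k : ℝ) * ((m n + (k : ℝ)⁻¹) ^ t - m n ^ t) : ℝ) = 0 := by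
    intro k hk
    have hs₀ := summable_mul_rpow_add_s19 (c := c) hm hs le_rfl zero_le_one
    simp only [add_zero] at hs₀
    calc ∑' n, c n * ((k : ℝ) * ((m n + (k : ℝ)⁻¹) ^ t - m n ^ t) : ℝ)
        = k * (∑' n, c n * ((m n + (k : ℝ)⁻¹) ^ t : ℝ) - ∑' n, c n * (m n ^ t : ℝ)) := by
          rw [← (summable_mul_rpow_add_s19 hm hs (inv_nonneg.2 k.cast_nonneg)
            (Nat.cast_inv_le_one k)).tsum_sub hs₀, ← tsum_mul_left]
          exact tsum_congr fun n => by push_cast; ring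
      _ = 0 := by rw [hzero k hk, hlimit, sub_zero, mul_zero]
  have hderiv : ∑' n, c n * (t * m n ^ (t - 1) : ℝ) = 0 :=
    tendsto_nhds_unique (tendsto_tsum_mul_slope_rpow hm hs)
      (tendsto_const_nhds.congr' (eventually_atTop.2 ⟨1, fun k hk => (hslope k hk).symm⟩))
  simp_rw [Complex.ofReal_mul, mul_left_comm (c _), tsum_mul_left] at hderiv
  exact (mul_eq_zero.1 hderiv).resolve_left (by exact_mod_cast ht)

end ShiftedSums

lemma summable_mul_natCast_rpow_of_succ {f : ℕ → ℝ} (hf : ∀ n, 0 ≤ f n) (t : ℝ)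
    (h : Summable fun n : ℕ => f (n + 1) * ((n : ℝ) + 2) ^ t) :
    Summable fun n : ℕ => f n * (n : ℝ) ^ t := by
  rw [← summable_nat_add_iff 1]
  refine (h.mul_left (2 ^ |t|)).of_nonneg_of_le
    (fun n => mul_nonneg (hf _) (rpow_nonneg (by positivity) _)) fun n => ?_
  have := hf (n + 1)
  push_cast
  calc f (n + 1) * ((n : ℝ) + 1) ^ t ≤ f (n + 1) * (2 ^ |t| * ((n : ℝ) + 2) ^ t) := by
        gcongr
        exact rpow_le_rpow_abs_mul_rpow t (by positivity) (by positivity)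
          (by linarith) (by linarith)
    _ = 2 ^ |t| * (f (n + 1) * ((n : ℝ) + 2) ^ t) := by ring

lemma summable_comp_mul_mul_comp_mul {b : ℕ → ℝ} (hb0 : ∀ n, 0 ≤ b n)
    (hb : Summable fun n => b n ^ 2) {i j : ℕ} (hi : 0 < i) (hj : 0 < j) :
    Summable fun n => b ((n + 1) * i) * b ((n + 1) * j) := by
  have hcomp : ∀ {p : ℕ}, 0 < p → Summable fun n => b ((n + 1) * p) ^ (2 : ℝ) := fun hp => by
    simpa only [rpow_two, Function.comp_def] using
      hb.comp_injective ((mul_left_injective₀ hp.ne').comp (add_left_injective 1))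
  exact summable_mul_of_Lp_Lq_of_nonneg .two_two (fun _ => hb0 _) (fun _ => hb0 _)
    (hcomp hi) (hcomp hj)

open ComplexConjugate in
lemma summable_norm_conj_mul_mul_rpow {a : ℕ → ℂ} {t : ℝ}
    (ha : Summable fun n : ℕ => ‖a n‖ ^ 2 * (n : ℝ) ^ t) {i j : ℕ} (hi : 0 < i) (hj : 0 < j) :
    Summable fun n : ℕ =>
      ‖conj (a ((n + 1) * i)) * a ((n + 1) * j)‖ * (((n : ℝ) + 1) * i * j) ^ t := by
  set b : ℕ → ℝ := fun n => ‖a n‖ * (n : ℝ) ^ (t / 2)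
  have hb : Summable fun n => b n ^ 2 := ha.congr fun n => by
    rw [mul_pow, ← rpow_mul_natCast n.cast_nonneg]
    norm_num
  refine ((summable_comp_mul_mul_comp_mul (fun n => by positivity) hb hi hj).mul_left
    (((i : ℝ) * j) ^ (t / 2))).congr fun n => ?_
  set u : ℝ := (n : ℝ) + 1
  have hsplit : (u * i * j) ^ t
      = ((i : ℝ) * j) ^ (t / 2) * ((u * i) ^ (t / 2) * (u * j) ^ (t / 2)) := by
    rw [← mul_rpow (by positivity) (by positivity), ← mul_rpow (by positivity) (by positivity),
      show (i : ℝ) * j * (u * i * (u * j)) = (u * i * j) ^ 2 by ring,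
      ← rpow_natCast_mul (by positivity)]
    ring_nf
  simp only [b, norm_mul, Complex.norm_conj, hsplit]
  push_cast
  ring

theorem orthogonality_limit_identities_general (t : ℝ) (ht : t ≠ 0) (a : ℕ → ℂ)
    (hmem : Summable fun n : ℕ => ‖a (n + 1)‖ ^ 2 * (((n : ℝ) + 2) ^ t))
    (horth : ∀ i j k : ℕ, 0 < i → 0 < j → 0 < k → Nat.Coprime i j → 1 < i * j →
      ∑' n : ℕ, (starRingEnd ℂ) (a ((n + 1) * i)) * a ((n + 1) * j) *
        (((((n : ℝ) + 1) * k * i * j + 1) ^ t : ℝ) : ℂ) = 0) :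
    ∀ i j : ℕ, 0 < i → 0 < j → Nat.Coprime i j → 1 < i * j →
      (∑' n : ℕ, (starRingEnd ℂ) (a ((n + 1) * i)) * a ((n + 1) * j) *
        (((((n : ℝ) + 1) * i * j) ^ t : ℝ) : ℂ) = 0) ∧
      (∑' n : ℕ, (starRingEnd ℂ) (a ((n + 1) * i)) * a ((n + 1) * j) *
        (((((n : ℝ) + 1) * i * j) ^ (t - 1) : ℝ) : ℂ) = 0) := by
  intro i j hi hj hco hij
  have hm : ∀ n : ℕ, 1 ≤ ((n : ℝ) + 1) * i * j := fun n => by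
    have hi1 : (1 : ℝ) ≤ i := by exact_mod_cast hi
    have hj1 : (1 : ℝ) ≤ j := by exact_mod_cast hj
    have hn1 : (1 : ℝ) ≤ n + 1 := by linarith [n.cast_nonneg (α := ℝ)]
    exact one_le_mul_of_one_le_of_one_le (one_le_mul_of_one_le_of_one_le hn1 hi1) hj1
  have hs := summable_norm_conj_mul_mul_rpow
    (summable_mul_natCast_rpow_of_succ (f := fun n => ‖a n‖ ^ 2) (fun _ => by positivity) t hmem)
    hi hj
  have hzero : ∀ k : ℕ, 0 < k → ∑' n : ℕ, (starRingEnd ℂ) (a ((n + 1) * i)) * a ((n + 1) * j) *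
      (((((n : ℝ) + 1) * i * j + (k : ℝ)⁻¹) ^ t : ℝ) : ℂ) = 0 := fun k hk =>
    tsum_mul_rpow_add_inv_eq_zero (fun n => zero_le_one.trans (hm n)) hk
      ((tsum_congr fun n => by ring_nf).trans (horth i j k hi hj hk hco hij))
  exact ⟨tsum_mul_rpow_eq_zero hm hs hzero, tsum_mul_rpow_sub_one_eq_zero ht hm hs hzero⟩

/-- Let `f(z) = ∑_{n ≥ 1} a_n z^n ∈ D_t` with `‖f‖_{D_t} = 1`, `t ≠ 0`,
and suppose `{f(z^k)}_{k ∈ ℕ}` is orthogonal in `D_t`, i.e.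
`⟨f(z^{ki}), f(z^{kj})⟩ = ∑_{n ≥ 1} conj(a_{ni}) a_{nj} (nkij + 1)^t = 0` for all `k ≥ 1`
and coprime `i, j` with `ij > 1`.  Then both identities hold for every such pair `i, j`:
`∑_{n ≥ 1} conj(a_{ni}) a_{nj} (nij)^t = 0` and
`∑_{n ≥ 1} conj(a_{ni}) a_{nj} (nij)^{t−1} = 0`. -/
theorem orthogonality_limit_identities (t : ℝ) (ht : t ≠ 0) (a : ℕ → ℂ)
    (hmem : Summable fun n : ℕ => ‖a (n + 1)‖ ^ 2 * (((n : ℝ) + 2) ^ t))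
    (hnorm : ∑' n : ℕ, ‖a (n + 1)‖ ^ 2 * (((n : ℝ) + 2) ^ t) = 1)
    (horth : ∀ i j k : ℕ, 0 < i → 0 < j → 0 < k → Nat.Coprime i j → 1 < i * j →
      ∑' n : ℕ, (starRingEnd ℂ) (a ((n + 1) * i)) * a ((n + 1) * j) *
        (((((n : ℝ) + 1) * k * i * j + 1) ^ t : ℝ) : ℂ) = 0) :
    ∀ i j : ℕ, 0 < i → 0 < j → Nat.Coprime i j → 1 < i * j →
      (∑' n : ℕ, (starRingEnd ℂ) (a ((n + 1) * i)) * a ((n + 1) * j) *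
        (((((n : ℝ) + 1) * i * j) ^ t : ℝ) : ℂ) = 0) ∧
      (∑' n : ℕ, (starRingEnd ℂ) (a ((n + 1) * i)) * a ((n + 1) * j) *
        (((((n : ℝ) + 1) * i * j) ^ (t - 1) : ℝ) : ℂ) = 0) :=
  orthogonality_limit_identities_general t ht a hmem horth
end
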